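/- arXiv:1612.01109 — 7 statements merged into one kernel-verified Lean document; each statement's English description precedes it below -/
import Mathlib

section
/- Let p be a prime and m ≥ 1, and let V = ((Fin m → ZMod p) → ℂ). For j ∈ Fin m let S_j be the linear operator on V given by (S_j f)(x) = f(x − e_j) (translation by the j-th standard basis vector), and for j ∈ Fin m with j + 1 < m let U_j be the linear operator (U_j f)(x) = f(x − (x j) • e_{j+1}) (subtracting the j-th coordinate from the (j+1)-st). For j ∈ Fin m set C_j = ∑_{r ∈ ZMod p} S_j ^ (r.val). Then a linear endomorphism A of V commutes with every S_j (j ∈ Fin m) and with every U_j (j with j+1 < m) if and only if A lies in the ℂ-linear span of the identity together with the operators S_s ^ (r.val) ∘ C_{s+1} ∘ C_{s+2} ∘ ⋯ ∘ C_{m−1} for s ∈ Fin m and r ∈ ZMod p with r ≠ 0. Moreover the space of such operators A has dimension m(p−1) + 1 over ℂ. -/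
/-- The (ordered) product `C t * C (t+1) * ⋯ * C (m-1)` of a family of
endomorphisms indexed by `Fin m`, starting from index `t`. -/
def prodFrom {m : ℕ} {V : Type*} [AddCommGroup V] [Module ℂ V]
    (C : Fin m → Module.End ℂ V) (t : ℕ) : Module.End ℂ V :=
  (((List.finRange m).filter fun j : Fin m => t ≤ j.val).map C).prod

/-!
An endomorphism `A` commuting with all translations of `G = (ZMod p)^m` is convolution by
`c = A δ₀`, and convolution by `c` commutes with composition by an additive automorphism `σ` of `G`
exactly when `c ∘ σ = c`. The `U_j` are composition with the shears `x ↦ x - x_j e_{j+1}`, whose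
joint orbits are `{0}` and, for `s : Fin m` and `r ≠ 0`, the sets of vectors whose first nonzero
coordinate is `x_s = r`: when `x_j ≠ 0`, iterating the `j`-th shear reaches every value of the
coordinate `j + 1`. So the commutant is the image under the (injective) convolution map of the
`m (p - 1) + 1` orbit indicators, and the convolution by the indicator of the orbit of `r e_s` is
`S_s^r C_{s+1} ⋯ C_{m-1}`, since `C_t` is convolution by the indicator of the line through `e_t`.
-/

open Finset

namespace UnitriangularCommutant

section Convolution

variable {R G : Type*} [CommSemiring R] [AddCommGroup G]

def shift (a : G) : Module.End R (G → R) := LinearMap.funLeft R R (· - a)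

@[simp] lemma shift_apply (a : G) (f : G → R) (x : G) : shift a f x = f (x - a) := rfl

lemma shift_zero : shift (0 : G) = (1 : Module.End R (G → R)) := by
  ext; simp

lemma shift_add (a b : G) : shift (a + b) = (shift a * shift b : Module.End R (G → R)) := by
  ext; simp [sub_sub]

lemma shift_nsmul (n : ℕ) (a : G) :
    shift (n • a) = (shift a ^ n : Module.End R (G → R)) := by
  induction n with
  | zero => simp [shift_zero]
  | succ n ih => rw [succ_nsmul, shift_add, ih, pow_succ]

lemma commute_shift (a b : G) : Commute (shift a : Module.End R (G → R)) (shift b) := by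
  rw [Commute, SemiconjBy, ← shift_add, ← shift_add, add_comm]

lemma shift_single_one [DecidableEq G] (a b : G) :
    shift a (Pi.single b (1 : R)) = Pi.single (b + a) 1 := by
  ext x
  simp [Pi.single_apply, sub_eq_iff_eq_add]

variable [Fintype G]

variable (R) in
def convolution : (G → R) →ₗ[R] Module.End R (G → R) := Fintype.linearCombination R shift

lemma convolution_apply (c : G → R) : convolution R c = ∑ a, c a • shift a :=
  Fintype.linearCombination_apply _ _ _

lemma convolution_apply_single [DecidableEq G] (c : G → R) (b : G) :
    convolution R c (Pi.single b 1) = shift b c := by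
  ext x
  simp [convolution_apply, Pi.single_apply, sub_eq_iff_comm (a := x)]

lemma convolution_single [DecidableEq G] (a : G) : convolution R (Pi.single a 1) = shift a := by
  simp [convolution_apply, Pi.single_apply]

lemma convolution_injective : Function.Injective (convolution R : (G → R) → _) := by
  classical
  intro c d h
  simpa [convolution_apply_single, shift_zero] using congr($h (Pi.single 0 1))

lemma commute_shift_convolution (a : G) (c : G → R) :
    Commute (shift a) (convolution R c) := by
  rw [convolution_apply]
  exact Commute.sum_right _ _ _ fun b _ => (commute_shift a b).smul_right _

lemma shift_mul_convolution (a : G) (c : G → R) :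
    shift a * convolution R c = convolution R (shift a c) := by
  simp only [convolution_apply, Finset.mul_sum, mul_smul_comm, ← shift_add]
  exact Fintype.sum_equiv (Equiv.addLeft a) _ _ fun b => by simp

lemma eq_convolution_of_commute [DecidableEq G] {A : Module.End R (G → R)}
    (hA : ∀ a, Commute A (shift a)) : A = convolution R (A (Pi.single 0 1)) := by
  refine (Pi.basisFun R G).ext fun b => ?_
  rw [Pi.basisFun_apply, convolution_apply_single, ← Module.End.mul_apply, ← (hA b).eq,
    Module.End.mul_apply, shift_single_one, zero_add]

omit [Fintype G] in
lemma shift_mul_funLeft (σ : G ≃+ G) (a : G) :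
    shift a * LinearMap.funLeft R R σ = LinearMap.funLeft R R σ * shift (σ a) := by
  ext; simp

lemma convolution_mul_funLeft (σ : G ≃+ G) (c : G → R) :
    convolution R c * LinearMap.funLeft R R σ =
      LinearMap.funLeft R R σ * convolution R (c ∘ σ.symm) := by
  simp only [convolution_apply, Finset.sum_mul, Finset.mul_sum, smul_mul_assoc, mul_smul_comm,
    shift_mul_funLeft]
  exact Fintype.sum_equiv σ _ _ fun b => by simp

lemma commute_convolution_funLeft_iff (σ : G ≃+ G) (c : G → R) :
    Commute (convolution R c) (LinearMap.funLeft R R σ) ↔ c ∘ σ = c := by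
  have hunit : IsUnit (LinearMap.funLeft R R σ) := (Module.End.isUnit_iff _).2
    ⟨LinearMap.funLeft_injective_of_surjective _ _ _ σ.surjective,
      LinearMap.funLeft_surjective_of_injective _ _ _ σ.injective⟩
  rw [Commute, SemiconjBy, convolution_mul_funLeft, hunit.mul_right_inj,
    convolution_injective.eq_iff]
  exact (σ.toEquiv.comp_symm_eq c c).trans eq_comm

end Convolution

section Shear

variable {ι M : Type*} [DecidableEq ι] [AddCommGroup M]

def shear (i j : ι) (hij : i ≠ j) : (ι → M) ≃+ (ι → M) where
  toFun x := x - Pi.single i (x j)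
  invFun x := x + Pi.single i (x j)
  left_inv x := by simp [Pi.single_eq_of_ne' hij]
  right_inv x := by simp [Pi.single_eq_of_ne' hij]
  map_add' x y := by simp only [Pi.add_apply, Pi.single_add]; abel

lemma shear_apply (i j : ι) (hij : i ≠ j) (x : ι → M) :
    shear i j hij x = x - Pi.single i (x j) := rfl

lemma shear_update_self (i j : ι) (hij : i ≠ j) (x : ι → M) (v : M) :
    shear i j hij (Function.update x i v) = Function.update x i (v - x j) := by
  ext t
  rcases eq_or_ne t i with rfl | ht
  · simp [shear_apply, Function.update_of_ne hij.symm]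
  · simp [shear_apply, ht]

lemma lt_mk_succ {m : ℕ} (j : Fin m) (h : (j : ℕ) + 1 < m) : j < ⟨j + 1, h⟩ :=
  Fin.lt_def.2 (Nat.lt_succ_self j)

def IsShearInvariant {m : ℕ} {β : Type*} (c : (Fin m → M) → β) : Prop :=
  ∀ (j : Fin m) (h : (j : ℕ) + 1 < m), c ∘ shear ⟨j + 1, h⟩ j (lt_mk_succ j h).ne' = c

end Shear

section Lead

variable {K : Type*} [DivisionRing K] [DecidableEq K] {m : ℕ}

def lead (x : Fin m → K) : Option (Fin m × Kˣ) :=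
  if h : ∃ i, x i ≠ 0 then some (Fin.find _ h, Units.mk0 _ (Fin.find_spec h)) else none

lemma lead_eq_none_iff {x : Fin m → K} : lead x = none ↔ x = 0 := by
  rw [lead]
  split_ifs with h
  · simp only [false_iff]
    rintro rfl
    simp at h
  · push Not at h
    simp only [true_iff]
    exact funext h

lemma lead_eq_some_iff {x : Fin m → K} {s : Fin m} {u : Kˣ} :
    lead x = some (s, u) ↔ x s = u ∧ ∀ t < s, x t = 0 := by
  rw [lead]
  split_ifs with h
  · rw [Option.some.injEq, Prod.mk.injEq, Units.ext_iff, Units.val_mk0]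
    constructor
    · rintro ⟨rfl, hu⟩
      exact ⟨hu, fun t ht => not_not.1 (Fin.find_min h ht)⟩
    · rintro ⟨hs, hlt⟩
      have hfind : Fin.find _ h = s :=
        (Fin.find_eq_iff h).2 ⟨by simp [hs], fun t ht => not_not.2 (hlt t ht)⟩
      exact ⟨hfind, hfind ▸ hs⟩
  · push Not at h
    simp [h, u.ne_zero.symm]

lemma lead_eq_some_of_eqOn {x y : Fin m → K} {s : Fin m} {u : Kˣ} (hx : lead x = some (s, u))
    (hy : ∀ t ≤ s, y t = x t) : lead y = some (s, u) := by
  rw [lead_eq_some_iff] at hx ⊢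
  exact ⟨(hy s le_rfl).trans hx.1, fun t ht => (hy t ht.le).trans (hx.2 t ht)⟩

lemma le_of_lead_eq_some {x : Fin m → K} {s j : Fin m} {u : Kˣ} (hx : lead x = some (s, u))
    (hj : x j ≠ 0) : s ≤ j :=
  not_lt.1 fun hjs => hj ((lead_eq_some_iff.1 hx).2 j hjs)

lemma lead_shear {i j : Fin m} (hji : j < i) (x : Fin m → K) :
    lead (shear i j hji.ne' x) = lead x := by
  by_cases hxj : x j = 0
  · simp [shear_apply, hxj]
  rcases hx : lead x with _ | ⟨s, u⟩
  · exact absurd (congrFun (lead_eq_none_iff.1 hx) j) hxj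
  refine lead_eq_some_of_eqOn hx fun t ht => ?_
  have hti : t ≠ i := ((ht.trans (le_of_lead_eq_some hx hxj)).trans_lt hji).ne
  simp [shear_apply, hti]

def leadPoint : Option (Fin m × Kˣ) → Fin m → K
  | none => 0
  | some (s, u) => Pi.single s u

lemma lead_leadPoint (i : Option (Fin m × Kˣ)) : lead (leadPoint i) = i := by
  rcases i with _ | ⟨s, u⟩
  · exact lead_eq_none_iff.2 rfl
  · exact lead_eq_some_iff.2 ⟨by simp [leadPoint], fun t ht => by simp [leadPoint, ht.ne]⟩

variable {R : Type*} [CommSemiring R]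

def leadIndicator (i : Option (Fin m × Kˣ)) (x : Fin m → K) : R :=
  if lead x = i then 1 else 0

lemma leadIndicator_none : (leadIndicator none : (Fin m → K) → R) = Pi.single 0 1 := by
  funext x
  simp [leadIndicator, lead_eq_none_iff, Pi.single_apply]

lemma isShearInvariant_leadIndicator (i : Option (Fin m × Kˣ)) :
    IsShearInvariant (leadIndicator i : (Fin m → K) → R) :=
  fun j h => funext fun x => by simp [leadIndicator, lead_shear (lt_mk_succ j h)]

lemma linearIndependent_leadIndicator [Fintype K] :
    LinearIndependent R (leadIndicator : Option (Fin m × Kˣ) → (Fin m → K) → R) := by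
  refine LinearIndependent.of_comp (LinearMap.funLeft R R leadPoint) ?_
  convert (Pi.basisFun R (Option (Fin m × Kˣ))).linearIndependent
  ext i j
  simp [leadIndicator, lead_leadPoint, Pi.single_apply]

end Lead

section Connectivity

variable {p : ℕ} [Fact p.Prime] {β : Type*}

lemma apply_update_eq_of_comp_shear {ι : Type*} [DecidableEq ι] {i j : ι} {hij : i ≠ j}
    {c : (ι → ZMod p) → β} (hc : c ∘ shear i j hij = c) {x : ι → ZMod p} (hx : x j ≠ 0)
    (v : ZMod p) : c (Function.update x i v) = c x := by
  have key : ∀ k : ℕ, c (Function.update x i (x i - k • x j)) = c x := by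
    intro k
    induction k with
    | zero => simp
    | succ k ih =>
      rw [← ih, ← congrFun hc (Function.update x i (x i - k • x j)), Function.comp_apply,
        shear_update_self, succ_nsmul, ← sub_sub]
  have hk : ((x i - v) / x j).val • x j = x i - v := by
    rw [nsmul_eq_mul, ZMod.natCast_zmod_val, div_mul_cancel₀ _ hx]
  simpa [hk] using key ((x i - v) / x j).val

namespace IsShearInvariant

variable {m : ℕ} {c : (Fin m → ZMod p) → β}

-- To move coordinate `n + 1`, first make coordinate `n` nonzero (possible by induction, as
-- `s < n`), move coordinate `n + 1` with the `n`-th shear, and restore coordinate `n`.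
lemma apply_update_of_lt (hc : IsShearInvariant c) {x : Fin m → ZMod p} {s : Fin m}
    {u : (ZMod p)ˣ} (hx : lead x = some (s, u)) {k : Fin m} (hsk : s < k) (v : ZMod p) :
    c (Function.update x k v) = c x := by
  obtain ⟨n, hn⟩ := k
  change (s : ℕ) + 1 ≤ n at hsk
  induction n, hsk using Nat.le_induction generalizing x v with
  | base =>
    refine apply_update_eq_of_comp_shear (hc s hn) ?_ v
    rw [(lead_eq_some_iff.1 hx).1]
    exact u.ne_zero
  | succ n hsn ih =>
    have hj : n < m := by omega
    have hxv : lead (Function.update x ⟨n + 1, hn⟩ v) = some (s, u) :=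
      lead_eq_some_of_eqOn hx fun t ht => Function.update_of_ne (by
        rintro rfl
        simp only [Fin.le_def] at ht
        omega) _ _
    calc c (Function.update x ⟨n + 1, hn⟩ v)
        = c (Function.update (Function.update x ⟨n + 1, hn⟩ v) ⟨n, hj⟩ 1) :=
          (ih hxv 1 hj).symm
      _ = c (Function.update (Function.update x ⟨n, hj⟩ 1) ⟨n + 1, hn⟩ v) := by
        rw [Function.update_comm (Fin.ne_of_gt (Fin.lt_def.2 (Nat.lt_succ_self n)))]
      _ = c (Function.update x ⟨n, hj⟩ 1) :=
        apply_update_eq_of_comp_shear (hc ⟨n, hj⟩ hn) (by simp) v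
      _ = c x := ih hx 1 hj

lemma apply_eq_of_eqOn (hc : IsShearInvariant c) {x y : Fin m → ZMod p} {s : Fin m}
    {u : (ZMod p)ˣ} (hx : lead x = some (s, u)) (hy : ∀ t ≤ s, y t = x t) : c y = c x := by
  suffices ∀ F : Finset (Fin m), (∀ t ∈ F, s < t) → c (F.piecewise y x) = c x by
    convert this (univ.filter (s < ·)) (by simp) using 2
    ext t
    by_cases hst : s < t
    · simp [hst]
    · simp [hst, hy t (not_lt.1 hst)]
  intro F
  induction F using Finset.induction_on with
  | empty => simp
  | insert k F _ ih =>
    intro hF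
    have hlead : lead (F.piecewise y x) = some (s, u) :=
      lead_eq_some_of_eqOn hx fun t ht =>
        F.piecewise_eq_of_notMem _ _ fun htF => (hF t (mem_insert_of_mem htF)).not_ge ht
    rw [Finset.piecewise_insert, hc.apply_update_of_lt hlead (hF k (mem_insert_self _ _)),
      ih fun t ht => hF t (mem_insert_of_mem ht)]

lemma apply_leadPoint_lead (hc : IsShearInvariant c) (x : Fin m → ZMod p) :
    c (leadPoint (lead x)) = c x := by
  rcases hx : lead x with _ | ⟨s, u⟩
  · rw [lead_eq_none_iff.1 hx]
    rfl
  refine hc.apply_eq_of_eqOn hx fun t ht => ?_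
  obtain rfl | hts := eq_or_ne t s
  · simp [leadPoint, (lead_eq_some_iff.1 hx).1]
  · simp [leadPoint, hts, (lead_eq_some_iff.1 hx).2 t (lt_of_le_of_ne ht hts)]

lemma eq_sum_leadIndicator {R : Type*} [CommSemiring R] {c : (Fin m → ZMod p) → R}
    (hc : IsShearInvariant c) : c = ∑ i, c (leadPoint i) • leadIndicator i := by
  funext x
  simp [leadIndicator, Finset.sum_apply, hc.apply_leadPoint_lead]

end IsShearInvariant

end Connectivity

section PrefixZero

variable {K R : Type*} [AddCommGroup K] [DecidableEq K] [CommSemiring R] {m : ℕ}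

def prefixZeroIndicator (t : ℕ) (x : Fin m → K) : R :=
  if ∀ k : Fin m, (k : ℕ) < t → x k = 0 then 1 else 0

lemma prefixZeroIndicator_of_le {t : ℕ} (ht : m ≤ t) :
    (prefixZeroIndicator t : (Fin m → K) → R) = Pi.single 0 1 := by
  funext x
  simp only [prefixZeroIndicator, Pi.single_apply, funext_iff, Pi.zero_apply]
  exact if_congr ⟨fun h k => h k (by omega), fun h k _ => h k⟩ rfl rfl

omit [DecidableEq K] in
lemma forall_lt_succ_sub_single_eq_zero_iff {x : Fin m → K} {t : ℕ} (ht : t < m) (v : K) :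
    (∀ k : Fin m, (k : ℕ) < t + 1 → (x - Pi.single (⟨t, ht⟩ : Fin m) v : Fin m → K) k = 0) ↔
      x ⟨t, ht⟩ = v ∧ ∀ k : Fin m, (k : ℕ) < t → x k = 0 := by
  constructor
  · intro h
    refine ⟨?_, fun k hk => ?_⟩
    · simpa [sub_eq_zero] using h ⟨t, ht⟩ (Nat.lt_succ_self t)
    · simpa [Fin.ext_iff, hk.ne] using h k (by omega)
  · rintro ⟨rfl, h⟩ k hk
    obtain hk | hk := Nat.lt_succ_iff_lt_or_eq.1 hk
    · simp [h k hk, Fin.ext_iff, hk.ne]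
    · obtain rfl : k = ⟨t, ht⟩ := Fin.ext hk
      simp

lemma sum_shift_single_prefixZeroIndicator [Fintype K] {t : ℕ} (ht : t < m) :
    ∑ v : K, shift (Pi.single (⟨t, ht⟩ : Fin m) v) (prefixZeroIndicator (t + 1)) =
      (prefixZeroIndicator t : (Fin m → K) → R) := by
  funext x
  simp_rw [Finset.sum_apply, shift_apply, prefixZeroIndicator,
    forall_lt_succ_sub_single_eq_zero_iff ht, ite_and]
  simp

lemma shift_single_prefixZeroIndicator {K : Type*} [DivisionRing K] [DecidableEq K] (s : Fin m)
    (u : Kˣ) :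
    shift (Pi.single s (u : K)) (prefixZeroIndicator (s + 1)) =
      (leadIndicator (some (s, u)) : (Fin m → K) → R) := by
  funext x
  simp only [shift_apply, prefixZeroIndicator, leadIndicator, lead_eq_some_iff]
  exact if_congr (forall_lt_succ_sub_single_eq_zero_iff s.isLt _) rfl rfl

end PrefixZero

section ProdFrom

variable {m : ℕ} {V : Type*} [AddCommGroup V] [Module ℂ V]

lemma filter_finRange_le_eq_cons {t : ℕ} (ht : t < m) :
    (List.finRange m).filter (fun j : Fin m => t ≤ j.val) =
      ⟨t, ht⟩ :: (List.finRange m).filter (fun j : Fin m => t + 1 ≤ j.val) := by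
  have hsorted := (List.sortedLT_finRange m).pairwise
  refine List.Pairwise.eq_of_mem_iff (r := (· < ·)) (hsorted.filter _)
    (List.pairwise_cons.2 ⟨fun j hj => ?_, hsorted.filter _⟩) fun j => ?_
  · simp only [List.mem_filter, List.mem_finRange, decide_eq_true_eq, true_and] at hj
    exact Fin.lt_def.2 hj
  · simp only [List.mem_filter, List.mem_finRange, decide_eq_true_eq, true_and, List.mem_cons,
      Fin.ext_iff]
    omega

lemma prodFrom_of_le (C : Fin m → Module.End ℂ V) {t : ℕ} (ht : m ≤ t) : prodFrom C t = 1 := by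
  rw [prodFrom, List.filter_eq_nil_iff.2 fun j _ => by simpa using j.isLt.trans_le ht]
  rfl

lemma prodFrom_of_lt (C : Fin m → Module.End ℂ V) {t : ℕ} (ht : t < m) :
    prodFrom C t = C ⟨t, ht⟩ * prodFrom C (t + 1) := by
  rw [prodFrom, filter_finRange_le_eq_cons ht, List.map_cons, List.prod_cons, prodFrom]

lemma prodFrom_eq_convolution {K : Type*} [AddCommGroup K] [Fintype K] [DecidableEq K]
    (C : Fin m → Module.End ℂ ((Fin m → K) → ℂ)) (hC : ∀ j, C j = ∑ v : K, shift (Pi.single j v))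
    (t : ℕ) :
    prodFrom C t = convolution ℂ (prefixZeroIndicator t) := by
  by_cases ht : t < m
  · rw [prodFrom_of_lt C ht, prodFrom_eq_convolution C hC (t + 1), hC, Finset.sum_mul]
    simp_rw [shift_mul_convolution]
    rw [← map_sum, sum_shift_single_prefixZeroIndicator ht]
  · rw [prodFrom_of_le C (not_lt.1 ht), prefixZeroIndicator_of_le (not_lt.1 ht), convolution_single,
      shift_zero]
termination_by m - t

end ProdFrom

section Commutant

variable {R : Type*} [CommSemiring R]

lemma val_nsmul_single_one {ι : Type*} [DecidableEq ι] {n : ℕ} [NeZero n] (j : ι) (r : ZMod n) :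
    r.val • Pi.single j (1 : ZMod n) = (Pi.single j r : ι → ZMod n) := by
  rw [← Pi.single_smul, nsmul_eq_mul, mul_one, ZMod.natCast_zmod_val]

lemma forall_commute_shift_iff {ι : Type*} [Fintype ι] [DecidableEq ι] {n : ℕ} [NeZero n]
    {A : Module.End R ((ι → ZMod n) → R)} :
    (∀ a, Commute A (shift a)) ↔ ∀ j, Commute A (shift (Pi.single j 1)) := by
  refine ⟨fun h j => h _, fun h a => ?_⟩
  rw [← Finset.univ_sum_single a]
  refine Finset.sum_induction _ (fun b => Commute A (shift b)) (fun b c hb hc => ?_) ?_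
    fun j _ => ?_
  · rw [shift_add]
    exact hb.mul_right hc
  · rw [shift_zero]
    exact Commute.one_right A
  · rw [← val_nsmul_single_one, shift_nsmul]
    exact (h j).pow_right _

variable {p m : ℕ} [Fact p.Prime]

lemma mem_span_convolution_leadIndicator_iff {A : Module.End R ((Fin m → ZMod p) → R)} :
    A ∈ Submodule.span R (Set.range fun i => convolution R (leadIndicator i)) ↔
      (∀ a, Commute A (shift a)) ∧
        ∀ (j : Fin m) (h : (j : ℕ) + 1 < m),
          Commute A (LinearMap.funLeft R R (shear ⟨j + 1, h⟩ j (lt_mk_succ j h).ne')) := by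
  constructor
  · intro hA
    induction hA using Submodule.span_induction with
    | mem _ hx =>
      obtain ⟨i, rfl⟩ := hx
      exact ⟨fun a => (commute_shift_convolution a _).symm,
        fun j h => (commute_convolution_funLeft_iff _ _).2 (isShearInvariant_leadIndicator i j h)⟩
    | zero => exact ⟨fun _ => Commute.zero_left _, fun _ _ => Commute.zero_left _⟩
    | add _ _ _ _ hx hy =>
      exact ⟨fun a => (hx.1 a).add_left (hy.1 a), fun j h => (hx.2 j h).add_left (hy.2 j h)⟩
    | smul r _ _ hx => exact ⟨fun a => (hx.1 a).smul_left r, fun j h => (hx.2 j h).smul_left r⟩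
  · rintro ⟨hT, hU⟩
    have hA : A = convolution R (A (Pi.single 0 1)) := eq_convolution_of_commute hT
    have hc : IsShearInvariant (A (Pi.single 0 1)) := fun j h =>
      (commute_convolution_funLeft_iff _ _).1 (hA ▸ hU j h)
    rw [hA, hc.eq_sum_leadIndicator, map_sum]
    exact Submodule.sum_mem _ fun i _ => by
      rw [map_smul]
      exact Submodule.smul_mem _ _ (Submodule.subset_span ⟨i, rfl⟩)

lemma generators_eq_range_convolution_leadIndicator
    (C : Fin m → Module.End ℂ ((Fin m → ZMod p) → ℂ))
    (hC : ∀ j, C j = ∑ v : ZMod p, shift (Pi.single j v)) :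
    {1} ∪ {g | ∃ (s : Fin m) (r : ZMod p), r ≠ 0 ∧ g = shift (Pi.single s r) * prodFrom C (s + 1)} =
      Set.range fun i => convolution ℂ (leadIndicator i) := by
  have hnone : convolution ℂ (leadIndicator (none : Option (Fin m × (ZMod p)ˣ))) = 1 := by
    rw [leadIndicator_none, convolution_single, shift_zero]
  have hsome : ∀ s (u : (ZMod p)ˣ), convolution ℂ (leadIndicator (some (s, u))) =
      shift (Pi.single s (u : ZMod p)) * prodFrom C (s + 1) := fun s u => by
    rw [prodFrom_eq_convolution C hC, shift_mul_convolution, shift_single_prefixZeroIndicator]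
  ext g
  simp only [Set.mem_union, Set.mem_singleton_iff, Set.mem_ofPred_eq, Set.mem_range,
    Option.exists, Prod.exists, hnone, hsome, ← Units.exists_iff_ne_zero, eq_comm (a := g)]

lemma finrank_span_convolution_leadIndicator {R : Type*} [Field R] :
    Module.finrank R (Submodule.span R (Set.range fun i : Option (Fin m × (ZMod p)ˣ) =>
      convolution R (leadIndicator i))) = m * (p - 1) + 1 := by
  have hli : LinearIndependent R fun i : Option (Fin m × (ZMod p)ˣ) =>
      convolution R (leadIndicator i) :=
    linearIndependent_leadIndicator.map' (convolution R)
      (LinearMap.ker_eq_bot.2 convolution_injective)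
  rw [finrank_span_eq_card hli, Fintype.card_option, Fintype.card_prod, Fintype.card_fin,
    ZMod.card_units]

end Commutant

end UnitriangularCommutant

open UnitriangularCommutant in
theorem stmt7_general (p m : ℕ) [Fact p.Prime]
    (S : Fin m → Module.End ℂ ((Fin m → ZMod p) → ℂ))
    (hS : ∀ (j : Fin m) (f : (Fin m → ZMod p) → ℂ) (x : Fin m → ZMod p),
      S j f x = f (x - Pi.single j 1))
    (U : Fin m → Module.End ℂ ((Fin m → ZMod p) → ℂ))
    (hU : ∀ (j : Fin m) (h : (j : ℕ) + 1 < m) (f : (Fin m → ZMod p) → ℂ)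
      (x : Fin m → ZMod p),
      U j f x = f (x - Pi.single (⟨(j : ℕ) + 1, h⟩ : Fin m) (x j)))
    (C : Fin m → Module.End ℂ ((Fin m → ZMod p) → ℂ))
    (hC : ∀ j : Fin m, C j = ∑ r : ZMod p, S j ^ (r.val)) :
    (∀ A : Module.End ℂ ((Fin m → ZMod p) → ℂ),
      ((∀ j : Fin m, A * S j = S j * A) ∧
        (∀ (j : Fin m), (j : ℕ) + 1 < m → A * U j = U j * A)) ↔
      A ∈ Submodule.span ℂ
        ({1} ∪ {g : Module.End ℂ ((Fin m → ZMod p) → ℂ) |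
          ∃ (s : Fin m) (r : ZMod p), r ≠ 0 ∧
            g = S s ^ (r.val) * prodFrom C ((s : ℕ) + 1)})) ∧
    Module.finrank ℂ
      (Submodule.span ℂ
        ({1} ∪ {g : Module.End ℂ ((Fin m → ZMod p) → ℂ) |
          ∃ (s : Fin m) (r : ZMod p), r ≠ 0 ∧
            g = S s ^ (r.val) * prodFrom C ((s : ℕ) + 1)}))
      = m * (p - 1) + 1 := by
  have hS' : ∀ j, S j = shift (Pi.single j 1) := fun j =>
    LinearMap.ext fun f => funext (hS j f)
  have hU' : ∀ (j : Fin m) (h : (j : ℕ) + 1 < m),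
      U j = LinearMap.funLeft ℂ ℂ (shear ⟨j + 1, h⟩ j (lt_mk_succ j h).ne') := fun j h =>
    LinearMap.ext fun f => funext (hU j h f)
  have hpow : ∀ s (r : ZMod p), S s ^ r.val = shift (Pi.single s r) := fun s r => by
    rw [hS', ← shift_nsmul, val_nsmul_single_one]
  have hgen : {1} ∪ {g | ∃ (s : Fin m) (r : ZMod p), r ≠ 0 ∧ g = S s ^ r.val * prodFrom C (s + 1)} =
      Set.range fun i => convolution ℂ (leadIndicator i) := by
    simp only [hpow]
    exact generators_eq_range_convolution_leadIndicator C fun j => by simp only [hC, hpow]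
  rw [hgen]
  refine ⟨fun A => ?_, finrank_span_convolution_leadIndicator⟩
  rw [mem_span_convolution_leadIndicator_iff, forall_commute_shift_iff]
  refine and_congr (by simp only [hS']; exact Iff.rfl)
    (forall_congr' fun j => forall_congr' fun h => ?_)
  rw [hU' j h]
  exact Iff.rfl

/-- Commutant of the quasiregular representation of the infinite unitriangular
group over `F_p` on `X¹` with invariant measure, finite level: a linear
endomorphism `A` of the functions on `(ZMod p)^m` commutes with all the shifts
`S_j` and with the operators `U_j` if and only if it lies in the span of the
identity together with the operators `S_s^r ∘ C_{s+1} ∘ ⋯ ∘ C_{m-1}`,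
`r ∈ F_p \ {0}`; this commutant has dimension `m(p-1) + 1`. -/
theorem stmt7 (p m : ℕ) [Fact p.Prime] (hm : 1 ≤ m)
    (S : Fin m → Module.End ℂ ((Fin m → ZMod p) → ℂ))
    (hS : ∀ (j : Fin m) (f : (Fin m → ZMod p) → ℂ) (x : Fin m → ZMod p),
      S j f x = f (x - Pi.single j 1))
    (U : Fin m → Module.End ℂ ((Fin m → ZMod p) → ℂ))
    (hU : ∀ (j : Fin m) (h : (j : ℕ) + 1 < m) (f : (Fin m → ZMod p) → ℂ)
      (x : Fin m → ZMod p),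
      U j f x = f (x - Pi.single (⟨(j : ℕ) + 1, h⟩ : Fin m) (x j)))
    (C : Fin m → Module.End ℂ ((Fin m → ZMod p) → ℂ))
    (hC : ∀ j : Fin m, C j = ∑ r : ZMod p, S j ^ (r.val)) :
    (∀ A : Module.End ℂ ((Fin m → ZMod p) → ℂ),
      ((∀ j : Fin m, A * S j = S j * A) ∧
        (∀ (j : Fin m), (j : ℕ) + 1 < m → A * U j = U j * A)) ↔
      A ∈ Submodule.span ℂ
        ({1} ∪ {g : Module.End ℂ ((Fin m → ZMod p) → ℂ) |
          ∃ (s : Fin m) (r : ZMod p), r ≠ 0 ∧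
            g = S s ^ (r.val) * prodFrom C ((s : ℕ) + 1)})) ∧
    Module.finrank ℂ
      (Submodule.span ℂ
        ({1} ∪ {g : Module.End ℂ ((Fin m → ZMod p) → ℂ) |
          ∃ (s : Fin m) (r : ZMod p), r ≠ 0 ∧
            g = S s ^ (r.val) * prodFrom C ((s : ℕ) + 1)}))
      = m * (p - 1) + 1 :=
  stmt7_general p m S hS U hU C hC
end

section
/- Let R be a commutative ring, m ≥ 1, and λ, c : Fin m → R. Define the m×m matrix D over R by D i j = (if i = j then λ i else 0) + 1 + c i * c j. Then det D = (∏_{k} λ k) + ∑_{i} (1 + (c i)^2) * ∏_{j ≠ i} λ j + ∑_{i < j} (c i − c j)^2 * ∏_{k ∉ {i,j}} λ k, where the last sum is over all pairs i < j in Fin m. -/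
/-!
Write `D = diagonal λ + B` with `B = 𝟙𝟙ᵀ + ccᵀ`. Expanding the determinant multilinearly in the
rows gives `det D = ∑_S (∏_{k ∉ S} λ k) · det B[S, S]`, a sum of principal minors of `B`.
Since `B` factors through a space of dimension two, its minors of size at least three vanish;
the `1 × 1` minors are `1 + c i ^ 2` and the `2 × 2` minors are
`(1 + c i ^ 2) (1 + c j ^ 2) - (1 + c i c j) ^ 2 = (c i - c j) ^ 2`.
-/

open Finset Matrix

theorem Finset.sum_eq_sum_range_sum_powersetCard {ι M : Type*} [Fintype ι] [AddCommMonoid M]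
    {f : Finset ι → M} (N : ℕ) (hf : ∀ s, N < #s → f s = 0) :
    ∑ s, f s = ∑ k ∈ range (N + 1), ∑ s ∈ powersetCard k univ, f s := by
  rw [← sum_filter_of_ne (p := fun s => #s ≤ N) fun s _ hs => not_lt.mp (mt (hf s) hs),
    ← sum_fiberwise_of_maps_to (g := card) (t := range (N + 1)) fun s hs => by
      simpa [Nat.lt_succ_iff] using hs]
  refine sum_congr rfl fun k hk => sum_congr ?_ fun _ _ => rfl
  ext s
  simp only [mem_filter, mem_univ, true_and, mem_powersetCard_univ]
  grind

theorem Finset.sum_powersetCard_two {ι M : Type*} [Fintype ι] [LinearOrder ι]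
    [LocallyFiniteOrderTop ι] [AddCommMonoid M] (f : Finset ι → M) :
    ∑ t ∈ powersetCard 2 univ, f t = ∑ i, ∑ j ∈ Ioi i, f {i, j} := by
  rw [sum_sigma']
  refine (sum_bij (fun p _ => {p.1, p.2}) ?_ ?_ ?_ fun _ _ => rfl).symm
  · rintro ⟨i, j⟩ hij
    simp only [mem_sigma, mem_Ioi] at hij
    simp [card_pair hij.2.ne]
  · rintro ⟨i, j⟩ hij ⟨i', j'⟩ hij' h
    simp only [mem_sigma, mem_Ioi] at hij hij'
    simp only [Finset.ext_iff, mem_insert, mem_singleton] at h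
    have := h i; have := h j; have := h i'; have := h j'
    grind
  · intro t ht
    obtain ⟨x, y, hxy, rfl⟩ := card_eq_two.mp (mem_powersetCard_univ.mp ht)
    rcases hxy.lt_or_gt with h | h
    · exact ⟨⟨x, y⟩, by simpa using h, rfl⟩
    · exact ⟨⟨y, x⟩, by simpa using h, pair_comm y x⟩

namespace Matrix

variable {n R : Type*} [CommRing R]

section DecidableEq

variable [DecidableEq n]

theorem det_submatrix_singleton (M : Matrix n n R) (i : n) :
    (M.submatrix ((↑) : ({i} : Finset n) → n) (↑)).det = M i i := by
  simp [det_unique]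

theorem det_submatrix_pair (M : Matrix n n R) {i j : n} (hij : i ≠ j) :
    (M.submatrix ((↑) : ({i, j} : Finset n) → n) (↑)).det = M i i * M j j - M i j * M j i := by
  let e : Fin 2 ≃ ({i, j} : Finset n) := by
    refine Equiv.ofBijective (fun k => ⟨![i, j] k, by fin_cases k <;> simp⟩) ⟨?_, ?_⟩
    · intro k l hkl
      fin_cases k <;> fin_cases l <;> simp_all [hij.symm]
    · rintro ⟨x, hx⟩
      rcases mem_insert.mp hx with rfl | hx
      · exact ⟨0, rfl⟩
      · exact ⟨1, by simp [mem_singleton.mp hx]⟩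
  rw [← det_submatrix_equiv_self e, det_fin_two]
  rfl

variable [Fintype n]

theorem det_diagonal_add (d : n → R) (M : Matrix n n R) :
    (diagonal d + M).det =
      ∑ s : Finset n, (∏ i ∈ sᶜ, d i) * (M.submatrix ((↑) : s → n) (↑)).det := by
  rw [add_comm]
  change detRowAlternating (M.row + (diagonal d).row) = _
  rw [detRowAlternating.map_add_univ]
  refine sum_congr rfl fun s _ => ?_
  let X : n → n → R := s.piecewise M.row (1 : Matrix n n R).row
  have hrows : s.piecewise M.row (diagonal d).row = sᶜ.piecewise (fun i => d i • X i) X := by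
    ext i j
    by_cases hi : i ∈ s <;> simp [X, Finset.piecewise, hi, diagonal_apply, one_apply, Matrix.row]
  rw [hrows, ← det_piecewise_one_eq_submatrix_det, ← smul_eq_mul]
  exact detRowAlternating.toMultilinearMap.map_piecewise_smul d X sᶜ

theorem det_mul_eq_zero_of_card_lt {k : Type*} [Fintype k] [DecidableEq k]
    (A : Matrix n k R) (B : Matrix k n R) (h : Fintype.card k < Fintype.card n) :
    (A * B).det = 0 := by
  -- Insert `P * Pᵀ = 1` for the matrix `P` of an embedding `k ↪ n`: `A * P` has a zero column.
  obtain ⟨e⟩ : Nonempty (k ↪ n) := Function.Embedding.nonempty_of_card_le h.le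
  obtain ⟨j, hj⟩ : ∃ j, ∀ l, e l ≠ j := by
    by_contra! hsurj
    exact h.not_ge (Fintype.card_le_of_surjective e hsurj)
  let P : Matrix k n R := (1 : Matrix n n R).submatrix e id
  have hP : P * Pᵀ = 1 := by
    rw [transpose_submatrix, transpose_one, ← submatrix_mul _ _ _ _ _ Function.bijective_id,
      Matrix.mul_one, submatrix_one_embedding]
  have hAP : (A * P).det = 0 :=
    det_eq_zero_of_column_eq_zero j fun i => by simp [P, mul_apply, hj]
  calc (A * B).det = (A * P * (Pᵀ * B)).det := by
        rw [Matrix.mul_assoc, ← Matrix.mul_assoc P, hP, Matrix.one_mul]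
    _ = 0 := by rw [det_mul, hAP, zero_mul]

theorem det_vecMulVec_add_vecMulVec (u₁ v₁ u₂ v₂ : n → R) (h : 2 < Fintype.card n) :
    (vecMulVec u₁ v₁ + vecMulVec u₂ v₂).det = 0 := by
  rw [vecMulVec_eq Unit, vecMulVec_eq Unit, ← fromCols_mul_fromRows]
  exact det_mul_eq_zero_of_card_lt _ _ (by simpa using h)

end DecidableEq

theorem det_diagonal_add_vecMulVec_add_vecMulVec [Fintype n] [LinearOrder n]
    [LocallyFiniteOrderTop n] (d u₁ v₁ u₂ v₂ : n → R) :
    (diagonal d + (vecMulVec u₁ v₁ + vecMulVec u₂ v₂)).det = ∏ k, d k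
      + ∑ i, (u₁ i * v₁ i + u₂ i * v₂ i) * ∏ j ∈ univ.erase i, d j
      + ∑ i, ∑ j ∈ Ioi i, (u₁ i * u₂ j - u₂ i * u₁ j) * (v₁ i * v₂ j - v₂ i * v₁ j)
          * ∏ k ∈ (univ.erase i).erase j, d k := by
  rw [det_diagonal_add, sum_eq_sum_range_sum_powersetCard 2 fun s hs => ?vanish]
  case vanish =>
    have hminor : (vecMulVec u₁ v₁ + vecMulVec u₂ v₂).submatrix ((↑) : s → n) (↑) =
        vecMulVec (fun i : s => u₁ i) (fun i : s => v₁ i)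
          + vecMulVec (fun i : s => u₂ i) (fun i : s => v₂ i) := by
      ext; simp [vecMulVec_apply]
    rw [hminor, det_vecMulVec_add_vecMulVec _ _ _ _ (by simpa using hs), mul_zero]
  simp only [sum_range_succ, sum_range_zero, zero_add, powersetCard_zero, sum_singleton,
    powersetCard_one, sum_map, sum_powersetCard_two]
  congr 1; congr 1
  · simp
  · refine sum_congr rfl fun i _ => ?_
    rw [Function.Embedding.coeFn_mk, compl_singleton, det_submatrix_singleton]
    simp [vecMulVec_apply, mul_comm]
  · refine sum_congr rfl fun i _ => sum_congr rfl fun j hj => ?_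
    have hcompl : ({i, j} : Finset n)ᶜ = (univ.erase i).erase j := by
      ext; simp [and_comm]
    rw [hcompl, det_submatrix_pair _ (mem_Ioi.mp hj).ne]
    simp only [add_apply, vecMulVec_apply]
    ring

end Matrix

theorem stmt8_general (R : Type*) [CommRing R] (m : ℕ) (lam c : Fin m → R)
    (D : Matrix (Fin m) (Fin m) R)
    (hD : ∀ i j, D i j = (if i = j then lam i else 0) + 1 + c i * c j) :
    D.det = (∏ k, lam k)
      + (∑ i, (1 + c i ^ 2) * ∏ j ∈ Finset.univ.erase i, lam j)
      + ∑ i, ∑ j ∈ Finset.Ioi i,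
          (c i - c j) ^ 2 * ∏ k ∈ (Finset.univ.erase i).erase j, lam k := by
  have hD' : D = diagonal lam + (vecMulVec 1 1 + vecMulVec c c) := by
    ext i j
    simp [hD, diagonal_apply, vecMulVec_apply, add_assoc]
  rw [hD', det_diagonal_add_vecMulVec_add_vecMulVec]
  simp only [Pi.one_apply, one_mul, mul_one, sq]
  congr 2 with i
  exact sum_congr rfl fun j _ => by ring

/-- Determinant of the matrix `D i j = λ i δ_{ij} + 1 + c i * c j`. -/
theorem stmt8 (R : Type*) [CommRing R] (m : ℕ) (hm : 1 ≤ m) (lam c : Fin m → R)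
    (D : Matrix (Fin m) (Fin m) R)
    (hD : ∀ i j, D i j = (if i = j then lam i else 0) + 1 + c i * c j) :
    D.det = (∏ k, lam k)
      + (∑ i, (1 + c i ^ 2) * ∏ j ∈ Finset.univ.erase i, lam j)
      + ∑ i, ∑ j ∈ Finset.Ioi i,
          (c i - c j) ^ 2 * ∏ k ∈ (Finset.univ.erase i).erase j, lam k :=
  stmt8_general R m lam c D hD
end

section
/- Let f, g : ℕ → ℝ. For n ∈ ℕ set Γₙ(f) = ∑_{k < n} (f k)^2, Γₙ(g) = ∑_{k < n} (g k)^2, Γₙ(f,g) = Γₙ(f)·Γₙ(g) − (∑_{k < n} f k · g k)^2 (the Gram determinant of the truncations), and Δₙ(f,g) = (Γₙ(f) + Γₙ(f,g)) / (Γₙ(g) + 1). Assume that the series ∑ (f k)^2 diverges, i.e., Γₙ(f) → ∞. Then Δₙ(f,g) → ∞ as n → ∞ in each of the following cases: (a) ∑ (g k)^2 < ∞; (b) ∑ (g k)^2 = ∞ and Γₙ(f)/Γₙ(g) → ∞; (c) ∑ (g k)^2 = ∞ and for every real s ≠ 0 the series ∑ (f k + s · g k)^2 diverges. -/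
/-!
Writing `Qₙ(s) = ∑_{k<n} (f k + s g k)² + s²`, one has
`Qₙ(s) = Γₙ(f) + 2s⟨f,g⟩ₙ + s²(Γₙ(g) + 1)`, whose minimum over `s` is exactly `Δₙ(f,g)`.
Since each `Qₙ(s)` is nondecreasing in `n`, so is `Δₙ`, and Cauchy–Schwarz gives
`Δₙ ≥ Γₙ(f)/(Γₙ(g) + 1)`, which settles cases (a) and (b). In case (c), if `Δₙ ≤ l` for all `n`,
the sublevel sets `{Qₙ ≤ l}` are nonempty, closed, decreasing and contained in `[-√l, √l]`,
so they share a point `s`; then `∑ (f k + s g k)²` converges, contradicting (c) if `s ≠ 0`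
and the divergence of `∑ f²` if `s = 0`.
-/

open Filter Finset

lemma exists_forall_le_of_monotone_of_isCompact {X : Type*} [TopologicalSpace X]
    (Q : ℕ → X → ℝ) (l : ℝ) (hQ : ∀ n, LowerSemicontinuous (Q n))
    (hmono : ∀ x, Monotone (Q · x)) (hne : ∀ n, ∃ x, Q n x ≤ l)
    (hcpt : IsCompact (Q 0 ⁻¹' Set.Iic l)) :
    ∃ x, ∀ n, Q n x ≤ l := by
  obtain ⟨x, hx⟩ := IsCompact.nonempty_iInter_of_sequence_nonempty_isCompact_isClosed
    (fun n => Q n ⁻¹' Set.Iic l) (fun n x hx => (hmono x n.le_succ).trans hx) hne hcpt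
    (fun n => (hQ n).isClosed_preimage l)
  exact ⟨x, fun n => Set.mem_iInter.1 hx n⟩

noncomputable def gramDelta (f g : ℕ → ℝ) (n : ℕ) : ℝ :=
  ((∑ k ∈ range n, f k ^ 2) +
    ((∑ k ∈ range n, f k ^ 2) * (∑ k ∈ range n, g k ^ 2)
      - (∑ k ∈ range n, f k * g k) ^ 2)) /
  ((∑ k ∈ range n, g k ^ 2) + 1)

def penalizedSqSum (f g : ℕ → ℝ) (n : ℕ) (s : ℝ) : ℝ :=
  ∑ k ∈ range n, (f k + s * g k) ^ 2 + s ^ 2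

noncomputable def gramMinimizer (f g : ℕ → ℝ) (n : ℕ) : ℝ :=
  -(∑ k ∈ range n, f k * g k) / ((∑ k ∈ range n, g k ^ 2) + 1)

section

variable (f g : ℕ → ℝ)

lemma penalizedSqSum_eq (n : ℕ) (s : ℝ) :
    penalizedSqSum f g n s = ∑ k ∈ range n, f k ^ 2 + 2 * s * ∑ k ∈ range n, f k * g k
      + s ^ 2 * (∑ k ∈ range n, g k ^ 2 + 1) := by
  have hexpand (k : ℕ) :
      (f k + s * g k) ^ 2 = f k ^ 2 + 2 * s * (f k * g k) + s ^ 2 * g k ^ 2 := by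
    ring
  simp only [penalizedSqSum, hexpand, sum_add_distrib, ← mul_sum]
  ring

lemma gramDelta_le_penalizedSqSum (n : ℕ) (s : ℝ) :
    gramDelta f g n ≤ penalizedSqSum f g n s := by
  have hB : 0 < ∑ k ∈ range n, g k ^ 2 + 1 := by positivity
  rw [gramDelta, penalizedSqSum_eq, div_le_iff₀ hB]
  nlinarith [sq_nonneg (s * (∑ k ∈ range n, g k ^ 2 + 1) + ∑ k ∈ range n, f k * g k)]

lemma gramDelta_eq_penalizedSqSum_gramMinimizer (n : ℕ) :
    gramDelta f g n = penalizedSqSum f g n (gramMinimizer f g n) := by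
  have hB : ∑ k ∈ range n, g k ^ 2 + 1 ≠ 0 := by positivity
  rw [gramDelta, penalizedSqSum_eq, gramMinimizer]
  field_simp
  ring

lemma penalizedSqSum_mono_left (s : ℝ) : Monotone (penalizedSqSum f g · s) := fun _ _ hmn =>
  add_le_add_left (sum_le_sum_of_subset_of_nonneg (range_subset_range.2 hmn)
    fun _ _ _ => sq_nonneg _) _

lemma gramDelta_mono : Monotone (gramDelta f g) := fun m n hmn => by
  rw [gramDelta_eq_penalizedSqSum_gramMinimizer f g n]
  exact (gramDelta_le_penalizedSqSum f g m _).trans (penalizedSqSum_mono_left f g _ hmn)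

lemma div_sum_range_sq_add_one_le_gramDelta (n : ℕ) :
    (∑ k ∈ range n, f k ^ 2) / (∑ k ∈ range n, g k ^ 2 + 1) ≤ gramDelta f g n := by
  have hB : 0 < ∑ k ∈ range n, g k ^ 2 + 1 := by positivity
  have hCS := sum_mul_sq_le_sq_mul_sq (range n) f g
  rw [gramDelta, div_le_div_iff₀ hB hB]
  nlinarith

lemma exists_forall_penalizedSqSum_le {l : ℝ} (hl : ∀ n, gramDelta f g n ≤ l) :
    ∃ s, ∀ n, penalizedSqSum f g n s ≤ l := by
  refine exists_forall_le_of_monotone_of_isCompact (penalizedSqSum f g) l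
    (fun n => Continuous.lowerSemicontinuous (by unfold penalizedSqSum; fun_prop))
    (penalizedSqSum_mono_left f g)
    (fun n => ⟨_, gramDelta_eq_penalizedSqSum_gramMinimizer f g n ▸ hl n⟩) ?_
  have hQ0 : penalizedSqSum f g 0 = fun s => s ^ 2 := by ext; simp [penalizedSqSum]
  rw [hQ0]
  exact (isCompact_Icc (a := -√l) (b := √l)).of_isClosed_subset
    ((continuous_pow 2).lowerSemicontinuous.isClosed_preimage l)
    fun s hs => abs_le.1 (Real.abs_le_sqrt hs)

lemma tendsto_gramDelta_of_summable
    (hf : Tendsto (fun n => ∑ k ∈ range n, f k ^ 2) atTop atTop)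
    (hg : Summable (fun k => g k ^ 2)) : Tendsto (gramDelta f g) atTop atTop := by
  have hG : 0 < ∑' k, g k ^ 2 + 1 := by positivity
  refine tendsto_atTop_mono (fun n => ?_) (hf.atTop_div_const hG)
  calc (∑ k ∈ range n, f k ^ 2) / (∑' k, g k ^ 2 + 1)
      ≤ (∑ k ∈ range n, f k ^ 2) / (∑ k ∈ range n, g k ^ 2 + 1) := by
        gcongr
        exact hg.sum_le_tsum _ fun k _ => sq_nonneg (g k)
    _ ≤ gramDelta f g n := div_sum_range_sq_add_one_le_gramDelta f g n

lemma tendsto_gramDelta_of_tendsto_div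
    (hg : Tendsto (fun n => ∑ k ∈ range n, g k ^ 2) atTop atTop)
    (hfg : Tendsto (fun n => (∑ k ∈ range n, f k ^ 2) / ∑ k ∈ range n, g k ^ 2)
      atTop atTop) : Tendsto (gramDelta f g) atTop atTop := by
  refine tendsto_atTop_mono' atTop ?_ (hfg.atTop_div_const two_pos)
  filter_upwards [hg.eventually_ge_atTop 1] with n hn
  calc (∑ k ∈ range n, f k ^ 2) / (∑ k ∈ range n, g k ^ 2) / 2
      = (∑ k ∈ range n, f k ^ 2) / (2 * ∑ k ∈ range n, g k ^ 2) := by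
        rw [div_div, mul_comm]
    _ ≤ (∑ k ∈ range n, f k ^ 2) / (∑ k ∈ range n, g k ^ 2 + 1) := by
        gcongr
        linarith
    _ ≤ gramDelta f g n := div_sum_range_sq_add_one_le_gramDelta f g n

lemma tendsto_gramDelta_of_forall_not_summable
    (hf : Tendsto (fun n => ∑ k ∈ range n, f k ^ 2) atTop atTop)
    (hfg : ∀ s : ℝ, s ≠ 0 → ¬ Summable (fun k => (f k + s * g k) ^ 2)) :
    Tendsto (gramDelta f g) atTop atTop := by
  refine (gramDelta_mono f g).tendsto_atTop_atTop fun l => ?_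
  by_contra! hl
  obtain ⟨s, hs⟩ := exists_forall_penalizedSqSum_le f g fun n => (hl n).le
  have hsum (n : ℕ) : ∑ k ∈ range n, (f k + s * g k) ^ 2 ≤ l :=
    (le_add_of_nonneg_right (sq_nonneg s)).trans (hs n)
  by_cases hs0 : s = 0
  · obtain ⟨n, hn⟩ := (hf.eventually_gt_atTop l).exists
    have := hsum n
    simp only [hs0, zero_mul, add_zero] at this
    linarith
  · exact hfg s hs0 (summable_of_sum_range_le (fun k => sq_nonneg _) hsum)

end

/-- If `Γₙ(f) = ∑_{k<n} (f k)² → ∞`, then the quantity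
`Δₙ(f,g) = (Γₙ(f) + Γₙ(f,g)) / (Γₙ(g) + 1)` (with `Γₙ(f,g)` the Gram
determinant of the truncations) tends to infinity in each of the three cases
(a), (b), (c). -/
theorem stmt10 (f g : ℕ → ℝ)
    (hf : Tendsto (fun n => ∑ k ∈ range n, f k ^ 2) atTop atTop)
    (h : Summable (fun k => g k ^ 2) ∨
        (¬ Summable (fun k => g k ^ 2) ∧
          Tendsto (fun n => (∑ k ∈ range n, f k ^ 2) / ∑ k ∈ range n, g k ^ 2)
            atTop atTop) ∨
        (¬ Summable (fun k => g k ^ 2) ∧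
          ∀ s : ℝ, s ≠ 0 → ¬ Summable (fun k => (f k + s * g k) ^ 2))) :
    Tendsto (fun n =>
        ((∑ k ∈ range n, f k ^ 2) +
          ((∑ k ∈ range n, f k ^ 2) * (∑ k ∈ range n, g k ^ 2)
            - (∑ k ∈ range n, f k * g k) ^ 2)) /
        ((∑ k ∈ range n, g k ^ 2) + 1))
      atTop atTop := by
  change Tendsto (gramDelta f g) atTop atTop
  rcases h with hg | ⟨hg, hfg⟩ | ⟨-, hfg⟩
  · exact tendsto_gramDelta_of_summable f g hf hg
  · exact tendsto_gramDelta_of_tendsto_div f g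
      ((not_summable_iff_tendsto_nat_atTop_of_nonneg fun k => sq_nonneg (g k)).1 hg) hfg
  · exact tendsto_gramDelta_of_forall_not_summable f g hf hfg
end

section
/- Let f, g : ℕ → ℝ. For n ∈ ℕ set Γₙ(f) = ∑_{k < n} (f k)^2, Γₙ(g) = ∑_{k < n} (g k)^2, and Γₙ(f,g) = Γₙ(f)·Γₙ(g) − (∑_{k < n} f k · g k)^2 (the Gram determinant of the truncations). Assume that for every pair (C₁, C₂) ∈ ℝ² with (C₁, C₂) ≠ (0, 0) the series ∑_k (C₁ · f k + C₂ · g k)^2 diverges. Then Γₙ(f,g)/Γₙ(g) → ∞ and Γₙ(f,g)/Γₙ(f) → ∞ as n → ∞. -/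
open Filter Finset

private lemma phi_eq (f g : ℕ → ℝ) (c : ℝ) (n : ℕ) :
    ∑ k ∈ range n, (f k - c * g k) ^ 2
      = (∑ k ∈ range n, f k ^ 2) - 2 * c * (∑ k ∈ range n, f k * g k)
        + c ^ 2 * ∑ k ∈ range n, g k ^ 2 := by
  have e : ∀ k, (f k - c * g k) ^ 2
      = f k ^ 2 - 2 * c * (f k * g k) + c ^ 2 * g k ^ 2 := fun k => by ring
  simp_rw [e, Finset.sum_add_distrib, Finset.sum_sub_distrib, ← Finset.mul_sum]

private lemma key (f g : ℕ → ℝ)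
    (h : ∀ C₁ C₂ : ℝ, (C₁, C₂) ≠ (0, 0) →
      ¬ Summable (fun k => (C₁ * f k + C₂ * g k) ^ 2)) :
    Tendsto (fun n =>
        ((∑ k ∈ range n, f k ^ 2) * (∑ k ∈ range n, g k ^ 2)
          - (∑ k ∈ range n, f k * g k) ^ 2) / ∑ k ∈ range n, g k ^ 2)
      atTop atTop := by
  set F : ℕ → ℝ := fun n => ∑ k ∈ range n, f k ^ 2 with hF
  set G : ℕ → ℝ := fun n => ∑ k ∈ range n, g k ^ 2 with hG
  set S : ℕ → ℝ := fun n => ∑ k ∈ range n, f k * g k with hS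
  set φ : ℕ → ℝ → ℝ := fun n c => ∑ k ∈ range n, (f k - c * g k) ^ 2 with hφ
  have hφeq : ∀ n c, φ n c = F n - 2 * c * S n + c ^ 2 * G n := fun n c => phi_eq f g c n
  have hφnonneg : ∀ n c, 0 ≤ φ n c := fun n c =>
    Finset.sum_nonneg fun k _ => sq_nonneg _
  have hφmono : ∀ c, Monotone fun n => φ n c := fun c m n hmn =>
    Finset.sum_le_sum_of_subset_of_nonneg (Finset.range_subset_range.2 hmn)
      (fun k _ _ => sq_nonneg _)
  have hCS : ∀ n, S n ^ 2 ≤ F n * G n := fun n =>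
    Finset.sum_mul_sq_le_sq_mul_sq _ _ _
  -- lower bound: D n / G n ≤ φ n c for all c, when G n > 0
  have hlow : ∀ n c, 0 < G n → (F n * G n - S n ^ 2) / G n ≤ φ n c := by
    intro n c hGn
    rw [div_le_iff₀ hGn]
    have key : φ n c * G n - (F n * G n - S n ^ 2) = (c * G n - S n) ^ 2 := by
      rw [hφeq]; ring
    nlinarith [sq_nonneg (c * G n - S n)]
  -- equality at the minimizer
  have hmin : ∀ n, 0 < G n → φ n (S n / G n) = (F n * G n - S n ^ 2) / G n := by
    intro n hGn
    rw [hφeq]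
    field_simp
    ring
  -- g is not identically zero
  have hgne : ∃ k, g k ≠ 0 := by
    by_contra hg
    push_neg at hg
    refine h 0 1 (by simp) ?_
    have : (fun k => ((0:ℝ) * f k + 1 * g k) ^ 2) = fun _ => 0 := by
      funext k; simp [hg k]
    rw [this]; exact summable_zero
  obtain ⟨k₀, hk₀⟩ := hgne
  set n₀ := k₀ + 1 with hn₀
  have hGmono : Monotone G := fun m n hmn =>
    Finset.sum_le_sum_of_subset_of_nonneg (Finset.range_subset_range.2 hmn)
      (fun k _ _ => sq_nonneg _)
  have hGn₀ : 0 < G n₀ := by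
    have : g k₀ ^ 2 ≤ G n₀ := Finset.single_le_sum (f := fun k => g k ^ 2)
      (fun k _ => sq_nonneg _) (Finset.self_mem_range_succ k₀)
    have h2 : 0 < g k₀ ^ 2 := by positivity
    linarith
  have hGpos : ∀ n, 0 < G (n + n₀) := fun n =>
    lt_of_lt_of_le hGn₀ (hGmono (Nat.le_add_left _ _))
  set Q : ℕ → ℝ := fun n => (F (n + n₀) * G (n + n₀) - S (n + n₀) ^ 2) / G (n + n₀)
    with hQ
  have hQmono : Monotone Q := by
    intro m n hmn
    calc Q m ≤ φ (m + n₀) (S (n + n₀) / G (n + n₀)) :=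
          hlow _ _ (hGpos m)
      _ ≤ φ (n + n₀) (S (n + n₀) / G (n + n₀)) :=
          hφmono _ (by omega)
      _ = Q n := hmin _ (hGpos n)
  have hQunbdd : ¬ BddAbove (Set.range Q) := by
    rintro ⟨M, hM⟩
    rw [mem_upperBounds] at hM
    have hMQ : ∀ n, Q n ≤ M := fun n => hM _ ⟨n, rfl⟩
    set c : ℕ → ℝ := fun n => S (n + n₀) / G (n + n₀) with hc
    have hφc : ∀ n, φ (n + n₀) (c n) ≤ M := fun n => (hmin _ (hGpos n)).le.trans (hMQ n)
    -- the c n are bounded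
    have hM0 : 0 ≤ M := by
      refine le_trans ?_ (hMQ 0)
      show (0:ℝ) ≤ (F (0 + n₀) * G (0 + n₀) - S (0 + n₀) ^ 2) / G (0 + n₀)
      rw [← hmin _ (hGpos 0)]
      exact hφnonneg _ _
    have hbd : ∀ n, (c n * G n₀ - S n₀) ^ 2 ≤ G n₀ * M := by
      intro n
      have h1 : φ n₀ (c n) ≤ M := le_trans (hφmono _ (Nat.le_add_left _ _)) (hφc n)
      have h2 : (F n₀ * G n₀ - S n₀ ^ 2) + (c n * G n₀ - S n₀) ^ 2 = φ n₀ (c n) * G n₀ := by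
        rw [hφeq]; ring
      nlinarith [hCS n₀, hGn₀]
    set A : ℝ := (Real.sqrt (G n₀ * M) + |S n₀|) / G n₀ with hA
    have hcbd : ∀ n, c n ∈ Set.Icc (-A) A := by
      intro n
      have h1 : |c n * G n₀ - S n₀| ≤ Real.sqrt (G n₀ * M) := by
        rw [← Real.sqrt_sq_eq_abs]
        exact Real.sqrt_le_sqrt (hbd n)
      have h2 : |c n * G n₀| ≤ Real.sqrt (G n₀ * M) + |S n₀| := by
        calc |c n * G n₀| = |(c n * G n₀ - S n₀) + S n₀| := by ring_nf
          _ ≤ |c n * G n₀ - S n₀| + |S n₀| := abs_add_le _ _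
          _ ≤ _ := by linarith
      have h3 : |c n| ≤ A := by
        rw [hA, le_div_iff₀ hGn₀]
        calc |c n| * G n₀ = |c n * G n₀| := by
              rw [abs_mul, abs_of_pos hGn₀]
          _ ≤ _ := h2
      exact abs_le.1 h3
    obtain ⟨a, -, ψ, hψmono, hψtend⟩ :=
      tendsto_subseq_of_bounded (Metric.isBounded_Icc (-A) A) hcbd
    -- partial sums of (f - a g)^2 are bounded by M
    have hpart : ∀ m, φ m a ≤ M := by
      intro m
      have hcont : Continuous fun x => φ m x := by
        simp only [hφ]
        exact continuous_finset_sum _ fun k _ => by fun_prop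
      have htend : Tendsto (fun j => φ m (c (ψ j))) atTop (nhds (φ m a)) :=
        (hcont.tendsto a).comp hψtend
      refine le_of_tendsto htend ?_
      filter_upwards [eventually_ge_atTop m] with j hj
      have : m ≤ ψ j + n₀ := le_trans (le_trans hj (hψmono.le_apply)) (Nat.le_add_right _ _)
      exact le_trans (hφmono _ this) (hφc (ψ j))
    have hsum : Summable (fun k => (f k - a * g k) ^ 2) :=
      summable_of_sum_range_le (fun k => sq_nonneg _) hpart
    refine h 1 (-a) (by simp) ?_
    have : (fun k => ((1:ℝ) * f k + (-a) * g k) ^ 2) = fun k => (f k - a * g k) ^ 2 := by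
      funext k; ring
    rw [this]; exact hsum
  have hQtend : Tendsto Q atTop atTop :=
    tendsto_atTop_atTop_of_monotone' hQmono hQunbdd
  exact (tendsto_add_atTop_iff_nat n₀).1 hQtend

/-- If no nontrivial linear combination `C₁ f + C₂ g` is square-summable, then
the Gram determinants `Γₙ(f,g)` of the truncations grow faster than both
`Γₙ(g)` and `Γₙ(f)`. -/
theorem stmt11 (f g : ℕ → ℝ)
    (h : ∀ C₁ C₂ : ℝ, (C₁, C₂) ≠ (0, 0) →
      ¬ Summable (fun k => (C₁ * f k + C₂ * g k) ^ 2)) :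
    Tendsto (fun n =>
        ((∑ k ∈ range n, f k ^ 2) * (∑ k ∈ range n, g k ^ 2)
          - (∑ k ∈ range n, f k * g k) ^ 2) / ∑ k ∈ range n, g k ^ 2)
      atTop atTop ∧
    Tendsto (fun n =>
        ((∑ k ∈ range n, f k ^ 2) * (∑ k ∈ range n, g k ^ 2)
          - (∑ k ∈ range n, f k * g k) ^ 2) / ∑ k ∈ range n, f k ^ 2)
      atTop atTop := by
  have h' : ∀ C₁ C₂ : ℝ, (C₁, C₂) ≠ (0, 0) →
      ¬ Summable (fun k => (C₁ * g k + C₂ * f k) ^ 2) := by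
    intro C₁ C₂ hne
    have hne' : (C₂, C₁) ≠ ((0:ℝ), (0:ℝ)) := fun hh => hne (by
      rw [Prod.mk.injEq] at hh ⊢
      exact ⟨hh.2, hh.1⟩)
    have := h C₂ C₁ hne'
    have heq : (fun k => (C₁ * g k + C₂ * f k) ^ 2)
        = fun k => (C₂ * f k + C₁ * g k) ^ 2 := by funext k; ring
    rw [heq]
    exact this
  refine ⟨key f g h, ?_⟩
  have hkey := key g f h'
  have heq : (fun n =>
        ((∑ k ∈ range n, g k ^ 2) * (∑ k ∈ range n, f k ^ 2)
          - (∑ k ∈ range n, g k * f k) ^ 2) / ∑ k ∈ range n, f k ^ 2)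
      = (fun n =>
        ((∑ k ∈ range n, f k ^ 2) * (∑ k ∈ range n, g k ^ 2)
          - (∑ k ∈ range n, f k * g k) ^ 2) / ∑ k ∈ range n, f k ^ 2) := by
    funext n
    rw [Finset.sum_congr rfl (fun k _ => mul_comm (g k) (f k)), mul_comm]
  rw [heq] at hkey
  exact hkey
end

section
/- Let a, b, α : ℕ → ℝ be sequences with a n > 0 for all n and ∑ a n = ∞. Suppose there is a constant C > 0 such that ∑_{k ≤ m} |b k| ≤ C · ∑_{k ≤ m} a k for all m, that α n → α as n → ∞, and that β_m := (∑_{k ≤ m} b k) / (∑_{k ≤ m} a k) → β as m → ∞. Then (∑_{k ≤ m} α k · b k) / (∑_{k ≤ m} a k) → α · β as m → ∞. -/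
open Filter Finset Asymptotics Topology

/-! Split `α k * b k = (α k - αlim) * b k + αlim * b k`. The second part contributes
`αlim * β`. For the first, `(α k - αlim) * b k = o(|b k| + a k)`, and summing a little-o
relation against a nonnegative sequence with divergent partial sums preserves it; the partial
sums of `|b k| + a k` are `O(∑ a)` by the domination hypothesis. -/

theorem isLittleO_sum_range_smul_of_tendsto_zero {E : Type*} [NormedAddCommGroup E]
    [NormedSpace ℝ E] {c a : ℕ → ℝ} {b : ℕ → E} (hc : Tendsto c atTop (𝓝 0)) (ha : 0 ≤ a)
    (hA : Tendsto (fun n => ∑ i ∈ range n, a i) atTop atTop)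
    (hb : (fun n => ∑ i ∈ range n, ‖b i‖) =O[atTop] fun n => ∑ i ∈ range n, a i) :
    (fun n => ∑ i ∈ range n, c i • b i) =o[atTop] fun n => ∑ i ∈ range n, a i := by
  -- `a` is added so that the partial sums of `g` diverge even when those of `‖b‖` do not.
  set g : ℕ → ℝ := fun i => ‖b i‖ + a i
  have hg : 0 ≤ g := fun i => add_nonneg (norm_nonneg _) (ha i)
  have hbg : b =O[atTop] g := IsBigO.of_bound 1 <| Eventually.of_forall fun i => by
    rw [one_mul, Real.norm_of_nonneg (hg i)]
    exact le_add_of_nonneg_right (ha i)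
  have hcb : (fun i => c i • b i) =o[atTop] g := by
    simpa using ((isLittleO_one_iff ℝ).2 hc).smul_isBigO hbg
  have hgA : (fun n => ∑ i ∈ range n, g i) =O[atTop] fun n => ∑ i ∈ range n, a i := by
    simpa only [g, sum_add_distrib] using hb.add (isBigO_refl _ _)
  have hgdiv : Tendsto (fun n => ∑ i ∈ range n, g i) atTop atTop :=
    tendsto_atTop_mono (fun n => sum_le_sum fun i _ => le_add_of_nonneg_left (norm_nonneg _)) hA
  exact (hcb.sum_range hg hgdiv).trans_isBigO hgA

theorem stmt14_general (a b α : ℕ → ℝ) (ha : ∀ n, 0 < a n)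
    (hdiv : Tendsto (fun m => ∑ k ∈ range (m + 1), a k) atTop atTop)
    (C : ℝ)
    (hbd : ∀ m, (∑ k ∈ range (m + 1), |b k|) ≤ C * ∑ k ∈ range (m + 1), a k)
    (αlim : ℝ) (hα : Tendsto α atTop (nhds αlim))
    (β : ℝ)
    (hβ : Tendsto
      (fun m => (∑ k ∈ range (m + 1), b k) / ∑ k ∈ range (m + 1), a k)
      atTop (nhds β)) :
    Tendsto
      (fun m => (∑ k ∈ range (m + 1), α k * b k) / ∑ k ∈ range (m + 1), a k)
      atTop (nhds (αlim * β)) := by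
  have hbA : (fun n => ∑ k ∈ range n, ‖b k‖) =O[atTop] fun n => ∑ k ∈ range n, a k := by
    refine IsBigO.of_bound C (Eventually.of_forall fun n => ?_)
    rw [Real.norm_of_nonneg (sum_nonneg fun k _ => norm_nonneg _),
      Real.norm_of_nonneg (sum_nonneg fun k _ => (ha k).le)]
    cases n with
    | zero => simp
    | succ m => simpa using hbd m
  have hsmall := (isLittleO_sum_range_smul_of_tendsto_zero (tendsto_sub_nhds_zero_iff.2 hα)
    (fun n => (ha n).le) ((tendsto_add_atTop_iff_nat 1).1 hdiv) hbA).comp_tendsto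
    (tendsto_add_atTop_nat 1)
  have hlim := hsmall.tendsto_div_nhds_zero.add (hβ.const_mul αlim)
  rw [zero_add] at hlim
  refine hlim.congr fun m => ?_
  simp only [Function.comp, smul_eq_mul, sub_mul, sum_sub_distrib, ← mul_sum]
  ring

/-- A particular case of Toeplitz's theorem: if `a n > 0`, `∑ a = ∞`, the
partial sums of `|b|` are dominated by those of `a`, `α n → αlim` and
`(∑_{k≤m} b k)/(∑_{k≤m} a k) → β`, then
`(∑_{k≤m} α k * b k)/(∑_{k≤m} a k) → αlim * β`. -/
theorem stmt14 (a b α : ℕ → ℝ) (ha : ∀ n, 0 < a n)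
    (hdiv : Tendsto (fun m => ∑ k ∈ range (m + 1), a k) atTop atTop)
    (C : ℝ) (hC : 0 < C)
    (hbd : ∀ m, (∑ k ∈ range (m + 1), |b k|) ≤ C * ∑ k ∈ range (m + 1), a k)
    (αlim : ℝ) (hα : Tendsto α atTop (nhds αlim))
    (β : ℝ)
    (hβ : Tendsto
      (fun m => (∑ k ∈ range (m + 1), b k) / ∑ k ∈ range (m + 1), a k)
      atTop (nhds β)) :
    Tendsto
      (fun m => (∑ k ∈ range (m + 1), α k * b k) / ∑ k ∈ range (m + 1), a k)
      atTop (nhds (αlim * β)) :=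
  stmt14_general a b α ha hdiv C hbd αlim hα β hβ
end

section
/- Let a, b be positive real numbers and β ∈ (0, 1]. Consider the following complex 4×4 matrices: A = !![0, 0, a⁻¹, 0; 0, 0, 0, a⁻¹; a, 0, 0, 0; 0, a, 0, 0], B = !![0, b⁻¹, 0, 0; b, 0, 0, 0; 0, 0, 0, b⁻¹; 0, 0, b, 0], and D = Matrix.diagonal ![0, β, 1, 1 + β]. Then every matrix M ∈ Matrix (Fin 4) (Fin 4) ℂ satisfying M * A = A * M, M * B = B * M and M * D = D * M is a scalar multiple of the identity: M = c • 1 for some c ∈ ℂ. Hence the algebra generated by A, B, D acts irreducibly on ℂ⁴. -/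
/-- The algebra generated by the matrices `A = T_{α₁} ⊗ I`, `B = I ⊗ T_{α₂}`
and `D = diag(0, β, 1, 1+β)` acts irreducibly on `ℂ⁴`: any matrix commuting
with all three is a scalar multiple of the identity. -/
theorem stmt17 (a b : ℝ) (ha : 0 < a) (hb : 0 < b)
    (β : ℝ) (hβ : β ∈ Set.Ioc (0 : ℝ) 1)
    (A B D : Matrix (Fin 4) (Fin 4) ℂ)
    (hA : A = !![0, 0, (a : ℂ)⁻¹, 0;
                 0, 0, 0, (a : ℂ)⁻¹;
                 (a : ℂ), 0, 0, 0;
                 0, (a : ℂ), 0, 0])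
    (hB : B = !![0, (b : ℂ)⁻¹, 0, 0;
                 (b : ℂ), 0, 0, 0;
                 0, 0, 0, (b : ℂ)⁻¹;
                 0, 0, (b : ℂ), 0])
    (hD : D = Matrix.diagonal ![0, (β : ℂ), 1, 1 + (β : ℂ)])
    (M : Matrix (Fin 4) (Fin 4) ℂ)
    (hMA : M * A = A * M) (hMB : M * B = B * M) (hMD : M * D = D * M) :
    ∃ c : ℂ, M = c • (1 : Matrix (Fin 4) (Fin 4) ℂ) := by
  have ha' : (a:ℂ) ≠ 0 := by exact_mod_cast ha.ne'
  have hb' : (b:ℂ) ≠ 0 := by exact_mod_cast hb.ne'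
  have hβ' : (β:ℂ) ≠ 0 := by exact_mod_cast hβ.1.ne'
  have hβ1 : (1:ℂ) + (β:ℂ) ≠ 0 := by
    have h : (0:ℝ) < 1 + β := by linarith [hβ.1]
    exact_mod_cast h.ne'
  subst hA hB hD
  rw [← Matrix.ext_iff] at hMA hMB hMD
  have eA00 := hMA 0 0
  have eB00 := hMB 0 0
  have eD00 := hMD 0 0
  have eA01 := hMA 0 1
  have eB01 := hMB 0 1
  have eD01 := hMD 0 1
  have eA02 := hMA 0 2
  have eB02 := hMB 0 2
  have eD02 := hMD 0 2
  have eA03 := hMA 0 3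
  have eB03 := hMB 0 3
  have eD03 := hMD 0 3
  have eA10 := hMA 1 0
  have eB10 := hMB 1 0
  have eD10 := hMD 1 0
  have eA11 := hMA 1 1
  have eB11 := hMB 1 1
  have eD11 := hMD 1 1
  have eA12 := hMA 1 2
  have eB12 := hMB 1 2
  have eD12 := hMD 1 2
  have eA13 := hMA 1 3
  have eB13 := hMB 1 3
  have eD13 := hMD 1 3
  have eA20 := hMA 2 0
  have eB20 := hMB 2 0
  have eD20 := hMD 2 0
  have eA21 := hMA 2 1
  have eB21 := hMB 2 1
  have eD21 := hMD 2 1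
  have eA22 := hMA 2 2
  have eB22 := hMB 2 2
  have eD22 := hMD 2 2
  have eA23 := hMA 2 3
  have eB23 := hMB 2 3
  have eD23 := hMD 2 3
  have eA30 := hMA 3 0
  have eB30 := hMB 3 0
  have eD30 := hMD 3 0
  have eA31 := hMA 3 1
  have eB31 := hMB 3 1
  have eD31 := hMD 3 1
  have eA32 := hMA 3 2
  have eB32 := hMB 3 2
  have eD32 := hMD 3 2
  have eA33 := hMA 3 3
  have eB33 := hMB 3 3
  have eD33 := hMD 3 3
  simp [Matrix.mul_apply, Fin.sum_univ_four, Matrix.vecHead, Matrix.vecTail] at eA00 eB00 eD00 eA01 eB01 eD01 eA02 eB02 eD02 eA03 eB03 eD03 eA10 eB10 eD10 eA11 eB11 eD11 eA12 eB12 eD12 eA13 eB13 eD13 eA20 eB20 eD20 eA21 eB21 eD21 eA22 eB22 eD22 eA23 eB23 eD23 eA30 eB30 eD30 eA31 eB31 eD31 eA32 eB32 eD32 eA33 eB33 eD33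
  clear hMA hMB hMD
  have z01 : M 0 1 = 0 := eD01.resolve_right (by exact_mod_cast hβ.1.ne')
  have z10 : M 1 0 = 0 := eD10.resolve_left (by exact_mod_cast hβ.1.ne')
  have z02 : M 0 2 = 0 := eD02
  have z20 : M 2 0 = 0 := eD20.symm
  have z03 : M 0 3 = 0 := eD03.resolve_right hβ1
  have z30 : M 3 0 = 0 := eD30.resolve_left hβ1
  have z13 : M 1 3 = 0 := by
    have : M 1 3 * 1 = 0 := by linear_combination eD13
    simpa using this
  have z31 : M 3 1 = 0 := by
    have : M 3 1 * 1 = 0 := by linear_combination -eD31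
    simpa using this
  have z23 : M 2 3 = 0 := by
    have h : M 2 3 * β = 0 := by linear_combination eD23
    rcases mul_eq_zero.mp h with h | h
    · exact h
    · exact absurd h hβ'
  have z32 : M 3 2 = 0 := by
    have h : M 3 2 * β = 0 := by linear_combination -eD32
    rcases mul_eq_zero.mp h with h | h
    · exact h
    · exact absurd h hβ'
  have z12 : M 1 2 = 0 := by
    have h : M 1 2 * a = 0 := by rw [eA10, z30]; ring
    rcases mul_eq_zero.mp h with h | h
    · exact h
    · exact absurd h ha'
  have z21 : M 2 1 = 0 := by
    have h : M 2 1 * b = 0 := by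
      have := eB20
      rw [z30] at this
      linear_combination this
    rcases mul_eq_zero.mp h with h | h
    · exact h
    · exact absurd h hb'
  have d22 : M 2 2 = M 0 0 := by
    have h : (M 2 2 - M 0 0) * a = 0 := by linear_combination eA20
    rcases mul_eq_zero.mp h with h | h
    · exact sub_eq_zero.mp h
    · exact absurd h ha'
  have d11 : M 1 1 = M 0 0 := by
    have h : (M 1 1 - M 0 0) * b = 0 := by linear_combination eB10
    rcases mul_eq_zero.mp h with h | h
    · exact sub_eq_zero.mp h
    · exact absurd h hb'
  have d33 : M 3 3 = M 0 0 := by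
    have h : (M 3 3 - M 2 2) * b = 0 := by linear_combination eB32
    rcases mul_eq_zero.mp h with h | h
    · rw [sub_eq_zero.mp h, d22]
    · exact absurd h hb'
  refine ⟨M 0 0, ?_⟩
  ext i j
  fin_cases i <;> fin_cases j <;>
    simp [Matrix.one_apply, z01, z02, z03, z10, z12, z13, z20, z21, z23, z30, z31, z32,
      d11, d22, d33]
end

section
/- Fix a prime p. For each n ∈ ℕ let α n : ZMod p → ℝ satisfy α n r > 0 for all r and ∑_{r ∈ ZMod p} α n r = 1, and let ν n be the probability measure on ZMod p with ν n {r} = α n r. Let μ_α be the infinite product probability measure ⊗_{n ∈ ℕ} ν n on X = ∏_{n ∈ ℕ} ZMod p. For each n let ξ n ∈ L²(X, μ_α) be (the class of) the bounded measurable function x ↦ (∑_{r ∈ ZMod p} Real.sqrt (α n r)) / Real.sqrt (α n (x n)) − p. Then the constant function 1 belongs to the closure in L²(X, μ_α) of the linear span of { ξ n : n ∈ ℕ } if and only if the series ∑_n ( p − (∑_{r ∈ ZMod p} Real.sqrt (α n r))^2 ) diverges. -/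
/-!
Put `S n = ∑ r, √(α n r)` and `c n = p - S n ^ 2`. The coordinates are independent under `μα`,
and a direct computation gives `⟪1, ξ n⟫ = -c n` and
`⟪ξ n, ξ m⟫ = c n * c m + [n = m] * c n * S n ^ 2`. Hence
`‖1 - ∑ a n • ξ n‖² = (1 + ∑ a n * c n) ^ 2 + ∑ a n ^ 2 * c n * S n ^ 2`, and by Cauchy–Schwarz
the infimum of this over finitely supported `a` is `1 / (1 + ∑ c n / S n ^ 2)`. As
`1 ≤ S n ^ 2 ≤ p`, this infimum is `0` exactly when `∑ c n` diverges.
-/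

open MeasureTheory Finset

theorem one_le_mul_of_sq_le_mul {A B T : ℝ} (hA : A ^ 2 ≤ B * T) (hB : 0 ≤ B) (hT : 0 ≤ T) :
    1 ≤ ((1 + A) ^ 2 + B) * (1 + T) := by
  rcases hT.eq_or_lt with rfl | hT
  · nlinarith [sq_nonneg A]
  · -- T * (((1 + A) ^ 2 + B) * (1 + T) - 1) = (T * (1 + A) + A) ^ 2 + (1 + T) * (B * T - A ^ 2)
    have hT1 : 0 ≤ 1 + T := by linarith
    nlinarith [sq_nonneg (T * (1 + A) + A), mul_nonneg hT1 (sub_nonneg.2 hA)]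

section QuadraticForm

variable {ι : Type*} {c v : ι → ℝ}

theorem inv_one_add_sum_sq_div_le (hv : ∀ n, 0 ≤ v n) (hvc : ∀ n, v n = 0 → c n = 0)
    (F : Finset ι) (a : ι → ℝ) :
    1 / (1 + ∑ n ∈ F, c n ^ 2 / v n) ≤ (1 + ∑ n ∈ F, a n * c n) ^ 2 + ∑ n ∈ F, a n ^ 2 * v n := by
  have hT : 0 ≤ ∑ n ∈ F, c n ^ 2 / v n := sum_nonneg fun n _ => div_nonneg (sq_nonneg _) (hv n)
  have hCS : (∑ n ∈ F, a n * c n) ^ 2 ≤ (∑ n ∈ F, a n ^ 2 * v n) * ∑ n ∈ F, c n ^ 2 / v n := by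
    refine sum_sq_le_sum_mul_sum_of_sq_le_mul F (fun n _ => mul_nonneg (sq_nonneg _) (hv n))
      (fun n _ => div_nonneg (sq_nonneg _) (hv n)) fun n _ => le_of_eq ?_
    rcases eq_or_ne (v n) 0 with h | h
    · simp [hvc n h]
    · field_simp
  rw [div_le_iff₀ (by positivity)]
  exact one_le_mul_of_sq_le_mul hCS (sum_nonneg fun n _ => mul_nonneg (sq_nonneg _) (hv n)) hT

theorem exists_quadratic_eq_inv_one_add_sum_sq_div (hvc : ∀ n, v n = 0 → c n = 0)
    (F : Finset ι) (ht : 0 ≤ ∑ n ∈ F, c n ^ 2 / v n) :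
    ∃ a : ι → ℝ, (1 + ∑ n ∈ F, a n * c n) ^ 2 + ∑ n ∈ F, a n ^ 2 * v n
      = 1 / (1 + ∑ n ∈ F, c n ^ 2 / v n) := by
  set t := ∑ n ∈ F, c n ^ 2 / v n
  have ht1 : 1 + t ≠ 0 := by positivity
  -- the equality case of the Cauchy–Schwarz step in `inv_one_add_sum_sq_div_le`
  refine ⟨fun n => -(c n / v n) / (1 + t), ?_⟩
  have hlin : ∑ n ∈ F, -(c n / v n) / (1 + t) * c n = -t / (1 + t) := by
    rw [neg_div, sum_div, ← sum_neg_distrib]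
    exact sum_congr rfl fun n _ => by ring
  have hsq : ∑ n ∈ F, (-(c n / v n) / (1 + t)) ^ 2 * v n = t / (1 + t) ^ 2 := by
    rw [sum_div]
    refine sum_congr rfl fun n _ => ?_
    rcases eq_or_ne (v n) 0 with h | h
    · simp [h, hvc n h]
    · field_simp
  rw [hlin, hsq]
  field_simp
  ring

end QuadraticForm

section GramCriterion

variable {ι E : Type*} [NormedAddCommGroup E] [InnerProductSpace ℝ E] [DecidableEq ι]
  {e : E} {ξ : ι → E} {c v : ι → ℝ}

theorem norm_sub_sum_smul_sq_eq (he : inner ℝ e e = 1) (heξ : ∀ n, inner ℝ e (ξ n) = -c n)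
    (hξξ : ∀ n m, inner ℝ (ξ n) (ξ m) = c n * c m + if n = m then v n else 0)
    (F : Finset ι) (a : ι → ℝ) :
    ‖e - ∑ n ∈ F, a n • ξ n‖ ^ 2 = (1 + ∑ n ∈ F, a n * c n) ^ 2 + ∑ n ∈ F, a n ^ 2 * v n := by
  have hcross : inner ℝ e (∑ n ∈ F, a n • ξ n) = -∑ n ∈ F, a n * c n := by
    simp only [inner_sum, inner_smul_right, heξ, mul_neg, sum_neg_distrib]
  have hdiag : ‖∑ n ∈ F, a n • ξ n‖ ^ 2 = (∑ n ∈ F, a n * c n) ^ 2 + ∑ n ∈ F, a n ^ 2 * v n := by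
    rw [← real_inner_self_eq_norm_sq]
    simp only [inner_sum, sum_inner, inner_smul_left, inner_smul_right, hξξ, mul_add,
      sum_add_distrib, mul_ite, mul_zero, sum_ite_eq', conj_trivial, mul_sum]
    congr 1
    · rw [sq, sum_mul_sum]
      exact sum_congr rfl fun _ _ => sum_congr rfl fun _ _ => by ring
    · exact sum_congr rfl fun n hn => by rw [if_pos hn]; ring
  rw [norm_sub_sq_real, hcross, hdiag, ← real_inner_self_eq_norm_sq, he]
  ring

theorem mem_closure_span_iff_not_summable (he : inner ℝ e e = 1)
    (heξ : ∀ n, inner ℝ e (ξ n) = -c n)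
    (hξξ : ∀ n m, inner ℝ (ξ n) (ξ m) = c n * c m + if n = m then v n else 0)
    (hv : ∀ n, 0 ≤ v n) (hvc : ∀ n, v n = 0 → c n = 0) :
    e ∈ closure (Submodule.span ℝ (Set.range ξ) : Set E) ↔ ¬ Summable fun n => c n ^ 2 / v n := by
  have hg : 0 ≤ fun n => c n ^ 2 / v n := fun n => div_nonneg (sq_nonneg _) (hv n)
  have hnorm := norm_sub_sum_smul_sq_eq he heξ hξξ
  constructor
  · intro hmem hsum
    set T := ∑' n, c n ^ 2 / v n
    have hT : 0 < 1 + T := by linarith [(tsum_nonneg fun n => hg n : 0 ≤ T)]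
    obtain ⟨w, hw, hdist⟩ := Metric.mem_closure_iff.1 hmem √(1 / (1 + T)) (by positivity)
    obtain ⟨a, rfl⟩ := Finsupp.mem_span_range_iff_exists_finsupp.1 hw
    have hlow : 1 / (1 + T) ≤ ‖e - ∑ n ∈ a.support, a n • ξ n‖ ^ 2 := calc
      1 / (1 + T) ≤ 1 / (1 + ∑ n ∈ a.support, c n ^ 2 / v n) :=
        one_div_le_one_div_of_le (by linarith [sum_nonneg fun n (_ : n ∈ a.support) => hg n])
          (by linarith [hsum.sum_le_tsum a.support fun n _ => hg n])
      _ ≤ _ := inv_one_add_sum_sq_div_le hv hvc _ _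
      _ = _ := (hnorm _ _).symm
    rw [dist_eq_norm, Real.lt_sqrt (norm_nonneg _)] at hdist
    exact hlow.not_gt hdist
  · intro hns
    rw [Metric.mem_closure_iff]
    intro ε hε
    obtain ⟨F, hF⟩ : ∃ F : Finset ι, 1 / ε ^ 2 < ∑ n ∈ F, c n ^ 2 / v n := by
      by_contra! h
      exact hns (summable_of_sum_le hg h)
    have ht : 0 ≤ ∑ n ∈ F, c n ^ 2 / v n := sum_nonneg fun n _ => hg n
    obtain ⟨a, ha⟩ := exists_quadratic_eq_inv_one_add_sum_sq_div hvc F ht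
    refine ⟨∑ n ∈ F, a n • ξ n,
      Submodule.sum_mem _ fun n _ => Submodule.smul_mem _ _ (Submodule.subset_span ⟨n, rfl⟩), ?_⟩
    have hsq : ‖e - ∑ n ∈ F, a n • ξ n‖ ^ 2 < ε ^ 2 := by
      rw [div_lt_iff₀ (by positivity)] at hF
      rw [hnorm, ha, div_lt_iff₀ (by linarith)]
      nlinarith
    rw [dist_eq_norm]
    exact lt_of_pow_lt_pow_left₀ 2 hε.le hsq

end GramCriterion

section ProbabilityVector

variable {β : Type*} [Fintype β] {w : β → ℝ}

theorem one_le_sum_sqrt (hw : ∀ r, 0 ≤ w r) (hsum : ∑ r, w r = 1) : 1 ≤ ∑ r, √(w r) := by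
  have hle : ∀ r, w r ≤ √(w r) := fun r =>
    Real.le_sqrt_of_sq_le (pow_le_of_le_one (hw r) (hsum ▸ single_le_sum (fun s _ => hw s)
      (mem_univ r)) two_ne_zero)
  calc 1 = ∑ r, w r := hsum.symm
    _ ≤ ∑ r, √(w r) := sum_le_sum fun r _ => hle r

theorem sq_sum_sqrt_le_card (hw : ∀ r, 0 ≤ w r) (hsum : ∑ r, w r = 1) :
    (∑ r, √(w r)) ^ 2 ≤ Fintype.card β := by
  have h := sq_sum_le_card_mul_sum_sq (s := univ) (f := fun r => √(w r))
  simpa only [Real.sq_sqrt (hw _), hsum, mul_one, card_univ] using h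

theorem sum_mul_sum_sqrt_div_sqrt_sub (hw : ∀ r, 0 < w r) (hsum : ∑ r, w r = 1) (k : ℝ) :
    ∑ r, w r * ((∑ s, √(w s)) / √(w r) - k) = (∑ s, √(w s)) ^ 2 - k := by
  have hterm : ∀ r, w r * ((∑ s, √(w s)) / √(w r) - k) = (∑ s, √(w s)) * √(w r) - k * w r := by
    intro r
    have hr := (Real.sqrt_pos.2 (hw r)).ne'
    nth_rewrite 1 [← Real.sq_sqrt (hw r).le]
    field_simp
    linear_combination (-k) * Real.sq_sqrt (hw r).le
  simp only [hterm, sum_sub_distrib, ← mul_sum, hsum]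
  ring

theorem sum_mul_sq_sum_sqrt_div_sqrt_sub (hw : ∀ r, 0 < w r) (hsum : ∑ r, w r = 1) (k : ℝ) :
    ∑ r, w r * ((∑ s, √(w s)) / √(w r) - k) ^ 2
      = Fintype.card β * (∑ s, √(w s)) ^ 2 - 2 * k * (∑ s, √(w s)) ^ 2 + k ^ 2 := by
  set S := ∑ s, √(w s)
  have hterm : ∀ r, w r * (S / √(w r) - k) ^ 2 = S ^ 2 - 2 * k * S * √(w r) + k ^ 2 * w r := by
    intro r
    have hr := (Real.sqrt_pos.2 (hw r)).ne'
    nth_rewrite 1 [← Real.sq_sqrt (hw r).le]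
    field_simp
    linear_combination k ^ 2 * Real.sq_sqrt (hw r).le
  simp only [hterm, sum_add_distrib, sum_sub_distrib, ← mul_sum, hsum, sum_const, card_univ,
    nsmul_eq_mul]
  ring

end ProbabilityVector

theorem summable_div_iff_of_one_le_of_le {ι : Type*} {f g : ι → ℝ} {C : ℝ} (hf : 0 ≤ f)
    (hg : ∀ n, 1 ≤ g n) (hgC : ∀ n, g n ≤ C) :
    Summable (fun n => f n / g n) ↔ Summable f := by
  have hg0 : ∀ n, 0 < g n := fun n => one_pos.trans_le (hg n)
  refine ⟨fun h => (h.mul_left C).of_nonneg_of_le hf fun n => ?_, fun h =>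
    h.of_nonneg_of_le (fun n => div_nonneg (hf n) (hg0 n).le) fun n => div_le_self (hf n) (hg n)⟩
  rw [mul_div_assoc', le_div_iff₀ (hg0 n)]
  exact (mul_comm _ _).trans_le (mul_le_mul_of_nonneg_right (hgC n) (hf n))

theorem MeasureTheory.L2.real_inner_eq_integral_mul {X : Type*} [MeasurableSpace X] {μ : Measure X}
    {f g : Lp ℝ 2 μ} {F G : X → ℝ} (hf : f =ᵐ[μ] F) (hg : g =ᵐ[μ] G) :
    inner ℝ f g = ∫ x, F x * G x ∂μ := by
  rw [L2.inner_def]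
  refine integral_congr_ae ?_
  filter_upwards [hf, hg] with x hfx hgx
  rw [RCLike.inner_apply, conj_trivial, hfx, hgx, mul_comm]

section Cylinders

variable {ι β : Type*} [MeasurableSpace β] {μ : Measure (ι → β)} {w : ι → β → ℝ}

theorem measureReal_eval_eq_of_cylinder (hw : ∀ n r, 0 ≤ w n r)
    (hμ : ∀ (s : Finset ι) (r : ι → β),
      μ {x | ∀ n ∈ s, x n = r n} = ∏ n ∈ s, ENNReal.ofReal (w n (r n)))
    (n : ι) (r : β) : μ.real {x | x n = r} = w n r := by
  have h := hμ {n} fun _ => r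
  simp only [mem_singleton, forall_eq, prod_singleton] at h
  rw [measureReal_def, h, ENNReal.toReal_ofReal (hw n r)]

theorem measureReal_eval_eval_eq_of_cylinder [DecidableEq ι] (hw : ∀ n r, 0 ≤ w n r)
    (hμ : ∀ (s : Finset ι) (r : ι → β),
      μ {x | ∀ n ∈ s, x n = r n} = ∏ n ∈ s, ENNReal.ofReal (w n (r n)))
    {n m : ι} (hnm : n ≠ m) (r s : β) :
    μ.real {x | x n = r ∧ x m = s} = w n r * w m s := by
  have h := hμ {n, m} fun k => if k = n then r else s
  simp only [forall_mem_insert, mem_singleton, forall_eq, if_pos, if_neg hnm.symm,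
    prod_pair hnm] at h
  rw [measureReal_def, h, ← ENNReal.ofReal_mul (hw n r),
    ENNReal.toReal_ofReal (mul_nonneg (hw n r) (hw m s))]

end Cylinders

section CoordinateIntegrals

variable {ι β : Type*} [Fintype β] [MeasurableSpace β] [DiscreteMeasurableSpace β]
  {μ : Measure (ι → β)} [IsFiniteMeasure μ]

theorem integral_comp_eval_eq_sum (n : ι) (g : β → ℝ) :
    ∫ x, g (x n) ∂μ = ∑ r, μ.real {x | x n = r} * g r := by
  have hn : Measurable fun x : ι → β => x n := measurable_pi_apply n
  rw [← integral_map hn.aemeasurable Measurable.of_discrete.aestronglyMeasurable,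
    integral_fintype Integrable.of_finite]
  refine sum_congr rfl fun r _ => ?_
  rw [map_measureReal_apply hn (measurableSet_singleton r), smul_eq_mul]
  rfl

theorem integral_comp_eval_mul_comp_eval_eq_sum (n m : ι) (g h : β → ℝ) :
    ∫ x, g (x n) * h (x m) ∂μ = ∑ r, ∑ s, μ.real {x | x n = r ∧ x m = s} * (g r * h s) := by
  have hnm : Measurable fun x : ι → β => (x n, x m) :=
    (measurable_pi_apply n).prodMk (measurable_pi_apply m)
  rw [← integral_map (f := fun y : β × β => g y.1 * h y.2) hnm.aemeasurable
    Measurable.of_discrete.aestronglyMeasurable, integral_fintype Integrable.of_finite,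
    Fintype.sum_prod_type]
  refine sum_congr rfl fun r _ => sum_congr rfl fun s _ => ?_
  rw [map_measureReal_apply hnm (measurableSet_singleton _), smul_eq_mul]
  simp [Set.preimage, Prod.ext_iff]

end CoordinateIntegrals

section SqrtRatioFunctions

variable {ι β : Type*} [Fintype β] [MeasurableSpace β] [DiscreteMeasurableSpace β]
  {μ : Measure (ι → β)} [IsProbabilityMeasure μ] {w : ι → β → ℝ}

theorem real_inner_one_eq_of_sqrt_ratio (hw : ∀ n r, 0 < w n r) (hsum : ∀ n, ∑ r, w n r = 1)
    (hμ : ∀ (s : Finset ι) (r : ι → β),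
      μ {x | ∀ n ∈ s, x n = r n} = ∏ n ∈ s, ENNReal.ofReal (w n (r n)))
    {n : ι} {k : ℝ} {one f : Lp ℝ 2 μ} (hone : one =ᵐ[μ] fun _ => 1)
    (hf : f =ᵐ[μ] fun x => (∑ r, √(w n r)) / √(w n (x n)) - k) :
    inner ℝ one f = -(k - (∑ r, √(w n r)) ^ 2) := by
  set g : β → ℝ := fun r => (∑ s, √(w n s)) / √(w n r) - k
  have hfg : f =ᵐ[μ] fun x => g (x n) := hf
  rw [L2.real_inner_eq_integral_mul hone hfg]
  simp only [one_mul]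
  rw [integral_comp_eval_eq_sum]
  simp only [measureReal_eval_eq_of_cylinder (fun n r => (hw n r).le) hμ, g,
    sum_mul_sum_sqrt_div_sqrt_sub (hw n) (hsum n), neg_sub]

theorem real_inner_eq_of_sqrt_ratio [DecidableEq ι] (hw : ∀ n r, 0 < w n r)
    (hsum : ∀ n, ∑ r, w n r = 1)
    (hμ : ∀ (s : Finset ι) (r : ι → β),
      μ {x | ∀ n ∈ s, x n = r n} = ∏ n ∈ s, ENNReal.ofReal (w n (r n)))
    {n m : ι} {k : ℝ} {f g : Lp ℝ 2 μ}
    (hf : f =ᵐ[μ] fun x => (∑ r, √(w n r)) / √(w n (x n)) - k)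
    (hg : g =ᵐ[μ] fun x => (∑ r, √(w m r)) / √(w m (x m)) - k) :
    inner ℝ f g = (k - (∑ r, √(w n r)) ^ 2) * (k - (∑ r, √(w m r)) ^ 2)
      + if n = m then (Fintype.card β - (∑ r, √(w n r)) ^ 2) * (∑ r, √(w n r)) ^ 2 else 0 := by
  have hw0 : ∀ n r, 0 ≤ w n r := fun n r => (hw n r).le
  set F : ι → β → ℝ := fun n r => (∑ s, √(w n s)) / √(w n r) - k
  have hmean : ∀ n, ∑ r, w n r * F n r = -(k - (∑ r, √(w n r)) ^ 2) := fun n => by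
    rw [sum_mul_sum_sqrt_div_sqrt_sub (hw n) (hsum n), neg_sub]
  have hfF : f =ᵐ[μ] fun x => F n (x n) := hf
  have hgF : g =ᵐ[μ] fun x => F m (x m) := hg
  rw [L2.real_inner_eq_integral_mul hfF hgF]
  split_ifs with hnm
  · subst hnm
    rw [integral_comp_eval_eq_sum (g := fun r => F n r * F n r)]
    simp only [measureReal_eval_eq_of_cylinder hw0 hμ, ← sq, F,
      sum_mul_sq_sum_sqrt_div_sqrt_sub (hw n) (hsum n)]
    ring
  · rw [integral_comp_eval_mul_comp_eval_eq_sum, add_zero, ← neg_mul_neg, ← hmean n, ← hmean m,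
      sum_mul_sum]
    refine sum_congr rfl fun r _ => sum_congr rfl fun s _ => ?_
    rw [measureReal_eval_eval_eq_of_cylinder hw0 hμ hnm]
    ring

end SqrtRatioFunctions

/-- Let `μ_α` be the product measure on `∏_{n ∈ ℕ} ZMod p` of the measures with
weights `α n`, and let `ξ n ∈ L²(μ_α)` be the function
`x ↦ (∑ᵣ √(α n r))/√(α n (x n)) − p`. Then the constant function `1` lies in
the closed linear span of `{ξ n}` in `L²(μ_α)` if and only if the series
`∑ₙ (p − (∑ᵣ √(α n r))²)` diverges. -/
theorem stmt19 (p : ℕ) [Fact p.Prime]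
    [MeasurableSpace (ZMod p)] [DiscreteMeasurableSpace (ZMod p)]
    (α : ℕ → ZMod p → ℝ) (hpos : ∀ n r, 0 < α n r)
    (hsum : ∀ n, ∑ r : ZMod p, α n r = 1)
    (μα : Measure (ℕ → ZMod p)) [IsProbabilityMeasure μα]
    (hμα : ∀ (s : Finset ℕ) (r : ℕ → ZMod p),
      μα {x | ∀ n ∈ s, x n = r n} = ∏ n ∈ s, ENNReal.ofReal (α n (r n)))
    (ξ : ℕ → Lp ℝ 2 μα)
    (hξ : ∀ n, (ξ n : (ℕ → ZMod p) → ℝ) =ᵐ[μα]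
      fun x => (∑ r : ZMod p, Real.sqrt (α n r)) / Real.sqrt (α n (x n)) - p)
    (one : Lp ℝ 2 μα)
    (hone : (one : (ℕ → ZMod p) → ℝ) =ᵐ[μα] fun _ => 1) :
    one ∈ closure (Submodule.span ℝ (Set.range ξ) : Set (Lp ℝ 2 μα)) ↔
      ¬ Summable (fun n => (p : ℝ) - (∑ r : ZMod p, Real.sqrt (α n r)) ^ 2) := by
  set S : ℕ → ℝ := fun n => ∑ r : ZMod p, √(α n r)
  set c : ℕ → ℝ := fun n => p - S n ^ 2
  have hα : ∀ n r, 0 ≤ α n r := fun n r => (hpos n r).le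
  have hS1 : ∀ n, 1 ≤ S n ^ 2 := fun n => one_le_pow₀ (one_le_sum_sqrt (hα n) (hsum n))
  have hSp : ∀ n, S n ^ 2 ≤ p := fun n => ZMod.card p ▸ sq_sum_sqrt_le_card (hα n) (hsum n)
  have hc : ∀ n, 0 ≤ c n := fun n => sub_nonneg.2 (hSp n)
  have he : inner ℝ one one = 1 := by
    rw [L2.real_inner_eq_integral_mul hone hone]
    simp
  have heξ n := real_inner_one_eq_of_sqrt_ratio hpos hsum hμα hone (hξ n)
  have hξξ n m := real_inner_eq_of_sqrt_ratio hpos hsum hμα (hξ n) (hξ m)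
  simp only [ZMod.card] at hξξ
  have hratio : (fun n => c n ^ 2 / (c n * S n ^ 2)) = fun n => c n / S n ^ 2 := by
    funext n
    rcases eq_or_ne (c n) 0 with h | h
    · simp [h]
    · field_simp
  have hS0 : ∀ n, S n ^ 2 ≠ 0 := fun n => (one_pos.trans_le (hS1 n)).ne'
  rw [mem_closure_span_iff_not_summable he heξ hξξ (fun n => mul_nonneg (hc n) (sq_nonneg _))
    (fun n h => (mul_eq_zero.1 h).resolve_right (hS0 n)), hratio,
    summable_div_iff_of_one_le_of_le hc hS1 hSp]
end
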